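/- arXiv:2405.19223 — 10 statements merged into one kernel-verified Lean document; each statement's English description precedes it below -/
import Mathlib

section
/- Let I be an ideal of K[X,Y], let α be algebraic over K, and let J be the ideal generated by (the image of) I in K(α)[X,Y]. If A(J) is generated by a single element as a K(α)-algebra, then there exists (f,g) ∈ K[X] × K[Y] (with coefficients in K) whose image in K(α)[X] × K(α)[Y] generates A(J) as a K(α)-algebra, and this same pair (f,g) generates A(I) as a K-algebra. -/
open MvPolynomial

/-- For algebra embeddings `ea : A → T`, `eb : B → T` and an ideal `I ⊆ T`, the subalgebra of
`A × B` consisting of pairs `(f, g)` with `ea f - eb g ∈ I`.  With `ea, eb` the embeddings of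
`K[X]` and `K[Y]` into `K[X,Y]`, this is the algebra `A(I)` of separated elements of `I`. -/
noncomputable def sepPair {R A B T : Type} [CommSemiring R] [CommRing A] [CommRing B] [CommRing T]
    [Algebra R A] [Algebra R B] [Algebra R T]
    (ea : A →ₐ[R] T) (eb : B →ₐ[R] T) (I : Ideal T) : Subalgebra R (A × B) where
  carrier := {fg | ea fg.1 - eb fg.2 ∈ I}
  add_mem' := by
    intro a b ha hb
    show ea (a.1 + b.1) - eb (a.2 + b.2) ∈ I
    have h : ea (a.1 + b.1) - eb (a.2 + b.2)
        = (ea a.1 - eb a.2) + (ea b.1 - eb b.2) := by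
      rw [map_add, map_add]; ring
    rw [h]
    exact I.add_mem ha hb
  mul_mem' := by
    intro a b ha hb
    show ea (a.1 * b.1) - eb (a.2 * b.2) ∈ I
    have h : ea (a.1 * b.1) - eb (a.2 * b.2)
        = (ea a.1 - eb a.2) * ea b.1 + eb a.2 * (ea b.1 - eb b.2) := by
      rw [map_mul, map_mul]; ring
    rw [h]
    exact I.add_mem (I.mul_mem_right _ ha) (I.mul_mem_left _ hb)
  one_mem' := by
    show ea 1 - eb 1 ∈ I
    simp
  zero_mem' := by
    show ea 0 - eb 0 ∈ I
    simp
  algebraMap_mem' := by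
    intro r
    show ea (algebraMap R A r) - eb (algebraMap R B r) ∈ I
    rw [AlgHom.commutes, AlgHom.commutes]
    simp



section Deg
variable {σ : Type} {R : Type} [CommRing R] [IsDomain R]

lemma fdeg_add (u v : σ →₀ ℕ) : (u + v).degree = u.degree + v.degree := by
  simp [Finsupp.degree_eq_weight_one]

omit [IsDomain R] in
lemma sum_eq_fdeg (m : σ →₀ ℕ) : (m.sum fun _ e => e) = m.degree := rfl

lemma topHom_ne_zero {p : MvPolynomial σ R} (hp : p ≠ 0) :
    homogeneousComponent p.totalDegree p ≠ 0 := by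
  classical
  have hne : p.support.Nonempty := support_nonempty.mpr hp
  obtain ⟨m, hm, hdeg⟩ := Finset.exists_mem_eq_sup p.support hne (fun s => s.sum fun _ e => e)
  intro h
  have hc : coeff m (homogeneousComponent p.totalDegree p) = coeff m p := by
    rw [coeff_homogeneousComponent, if_pos]
    show m.degree = p.totalDegree
    rw [totalDegree, hdeg]
    rfl
  rw [h] at hc
  exact (mem_support_iff.mp hm) (by simpa using hc.symm)

lemma totalDegree_mul_eq {p q : MvPolynomial σ R} (hp : p ≠ 0) (hq : q ≠ 0) :
    (p * q).totalDegree = p.totalDegree + q.totalDegree := by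
  classical
  refine le_antisymm (totalDegree_mul p q) ?_
  set dp := p.totalDegree with hdp
  set dq := q.totalDegree with hdq
  set P := homogeneousComponent dp p with hP
  set Q := homogeneousComponent dq q with hQ
  have hPhom : P.IsHomogeneous dp := homogeneousComponent_isHomogeneous dp p
  have hQhom : Q.IsHomogeneous dq := homogeneousComponent_isHomogeneous dq q
  have hPQ : P * Q ≠ 0 := mul_ne_zero (topHom_ne_zero hp) (topHom_ne_zero hq)
  obtain ⟨m, hm⟩ := exists_coeff_ne_zero hPQ
  have hmdeg : m.degree = dp + dq := by
    rw [Finsupp.degree_eq_weight_one]; exact (hPhom.mul hQhom) hm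
  have key : coeff m (p * q) = coeff m (P * Q) := by
    rw [coeff_mul, coeff_mul]
    refine Finset.sum_congr rfl ?_
    rintro ⟨u, v⟩ huv
    have huvm : u + v = m := Finset.HasAntidiagonal.mem_antidiagonal.mp huv
    have hsum : u.degree + v.degree = dp + dq := by rw [← fdeg_add, huvm, hmdeg]
    simp only []
    rcases lt_trichotomy u.degree dp with hlt | heq | hgt
    · -- then v.degree > dq
      have hv : dq < v.degree := by omega
      have h1 : coeff v q = 0 := coeff_eq_zero_of_totalDegree_lt (by rw [← sum_eq_fdeg] at hv; exact hv)
      have h2 : coeff v Q = 0 := by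
        by_contra hne
        have := hQhom hne
        rw [Pi.one_def, ← Finsupp.degree_eq_weight_one] at this
        omega
      rw [h1, h2, mul_zero, mul_zero]
    · have hv : v.degree = dq := by omega
      have h1 : coeff u P = coeff u p := by
        rw [hP, coeff_homogeneousComponent, if_pos heq]
      have h2 : coeff v Q = coeff v q := by
        rw [hQ, coeff_homogeneousComponent, if_pos hv]
      rw [h1, h2]
    · have h1 : coeff u p = 0 := coeff_eq_zero_of_totalDegree_lt (by rw [← sum_eq_fdeg] at hgt; exact hgt)
      have h2 : coeff u P = 0 := by
        by_contra hne
        have := hPhom hne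
        rw [Pi.one_def, ← Finsupp.degree_eq_weight_one] at this
        omega
      rw [h1, h2, zero_mul, zero_mul]
  have hmem : m ∈ (p * q).support := by
    rw [mem_support_iff, key]; exact hm
  have := le_totalDegree hmem
  rw [sum_eq_fdeg, hmdeg] at this
  exact this

lemma totalDegree_pow_eq (p : MvPolynomial σ R) (k : ℕ) :
    (p ^ k).totalDegree = k * p.totalDegree := by
  rcases eq_or_ne p 0 with rfl | hp
  · rcases Nat.eq_zero_or_pos k with rfl | hk
    · simp
    · rw [zero_pow hk.ne']; simp
  · induction k with
    | zero => simp
    | succ k ih =>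
        rw [pow_succ, totalDegree_mul_eq (pow_ne_zero _ hp) hp, ih]
        ring
end Deg

section Deg2
variable {σ : Type} {L : Type} [Field L]

lemma eq_C_of_totalDegree_zero {R : Type} [CommSemiring R] {p : MvPolynomial σ R}
    (h : p.totalDegree = 0) : p = C (coeff 0 p) := by
  classical
  ext m
  rcases eq_or_ne m 0 with rfl | hm
  · simp
  · rw [coeff_C, if_neg (Ne.symm hm)]
    by_contra hc
    have hmem : m ∈ p.support := mem_support_iff.mpr hc
    obtain ⟨x, hx⟩ : ∃ x, m x ≠ 0 := by
      by_contra hall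
      push_neg at hall
      exact hm (Finsupp.ext hall)
    exact hx (((totalDegree_eq_zero_iff σ p).mp h) m hmem x)

lemma totalDegree_aeval (f : MvPolynomial σ L) (q : Polynomial L) :
    (Polynomial.aeval f q).totalDegree = q.natDegree * f.totalDegree := by
  classical
  rcases eq_or_ne f.totalDegree 0 with hf0 | hf0
  · rw [hf0, mul_zero]
    obtain ⟨c, rfl⟩ : ∃ c, f = C c := ⟨f.coeff 0, eq_C_of_totalDegree_zero hf0⟩
    have h1 : Polynomial.aeval (C c : MvPolynomial σ L) q = C (Polynomial.eval c q) := by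
      rw [← MvPolynomial.algebraMap_eq, Polynomial.aeval_algebraMap_apply_eq_algebraMap_eval,
        MvPolynomial.algebraMap_eq]
    rw [h1, totalDegree_C]
  · have hf : f ≠ 0 := fun h => hf0 (by rw [h, totalDegree_zero])
    have H : ∀ N, ∀ q : Polynomial L, q.natDegree ≤ N →
        (Polynomial.aeval f q).totalDegree = q.natDegree * f.totalDegree := by
      intro N
      induction N with
      | zero =>
          intro q hq
          obtain ⟨c, rfl⟩ := Polynomial.natDegree_eq_zero.mp (Nat.le_zero.mp hq)
          simp [Polynomial.aeval_C, MvPolynomial.algebraMap_eq]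
      | succ N ih =>
          intro q hq
          rcases le_or_gt q.natDegree N with h | h
          · exact ih q h
          have hd : q.natDegree = N + 1 := by omega
          have hq0 : q ≠ 0 := fun h0 => by simp [h0] at hd
          have hlc : q.leadingCoeff ≠ 0 := Polynomial.leadingCoeff_ne_zero.mpr hq0
          have hlead : (Polynomial.aeval f (Polynomial.C q.leadingCoeff *
              Polynomial.X ^ q.natDegree)).totalDegree = q.natDegree * f.totalDegree := by
            rw [map_mul, map_pow, Polynomial.aeval_C, Polynomial.aeval_X,
              MvPolynomial.algebraMap_eq,
              totalDegree_mul_eq (fun hc => hlc (by simpa using hc)) (pow_ne_zero _ hf),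
              totalDegree_C, totalDegree_pow_eq, zero_add]
          rcases q.eraseLead_natDegree_lt_or_eraseLead_eq_zero with hlt | h0
          · have heq : q = q.eraseLead + Polynomial.C q.leadingCoeff * Polynomial.X ^ q.natDegree :=
              (Polynomial.eraseLead_add_C_mul_X_pow q).symm
            have hel := ih q.eraseLead (by omega)
            rw [heq] at hd ⊢
            rw [map_add]
            rw [totalDegree_add_eq_right_of_totalDegree_lt]
            · rw [hlead]
              congr 1
              omega
            · rw [hlead, hel]
              have : q.eraseLead.natDegree < q.natDegree := hlt
              have hfpos : 0 < f.totalDegree := Nat.pos_of_ne_zero hf0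
              calc q.eraseLead.natDegree * f.totalDegree
                  < q.natDegree * f.totalDegree := by
                    exact (Nat.mul_lt_mul_right hfpos).mpr this
                _ = _ := by rw [heq]
          · have heq : q = Polynomial.C q.leadingCoeff * Polynomial.X ^ q.natDegree := by
              conv_lhs => rw [← Polynomial.eraseLead_add_C_mul_X_pow q]
              rw [h0, zero_add]
            conv_lhs => rw [heq]
            rw [hlead]
    exact H q.natDegree q le_rfl
end Deg2

section Cmap
variable {K L : Type} [Field K] [Field L] [Algebra K L] {σ τ : Type}

/-- Apply a `K`-linear functional to all coefficients of a multivariate polynomial over `L`. -/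
noncomputable def cmap (π : L →ₗ[K] K) (p : MvPolynomial σ L) : MvPolynomial σ K :=
  ∑ m ∈ p.support, monomial m (π (coeff m p))

lemma coeff_cmap (π : L →ₗ[K] K) (p : MvPolynomial σ L) (n : σ →₀ ℕ) :
    coeff n (cmap π p) = π (coeff n p) := by
  classical
  rw [cmap, coeff_sum]
  simp_rw [coeff_monomial]
  rw [Finset.sum_ite_eq' p.support n (fun m => π (coeff m p))]
  split_ifs with h
  · rfl
  · rw [notMem_support_iff.mp h, map_zero]

lemma cmap_add (π : L →ₗ[K] K) (p q : MvPolynomial σ L) :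
    cmap π (p + q) = cmap π p + cmap π q := by
  ext n; simp [coeff_cmap]

lemma cmap_zero (π : L →ₗ[K] K) : cmap π (0 : MvPolynomial σ L) = 0 := by
  ext n; simp [coeff_cmap]

lemma cmap_sub (π : L →ₗ[K] K) (p q : MvPolynomial σ L) :
    cmap π (p - q) = cmap π p - cmap π q := by
  ext n; simp [coeff_cmap]

lemma cmap_monomial (π : L →ₗ[K] K) (m : σ →₀ ℕ) (c : L) :
    cmap π (monomial m c) = monomial m (π c) := by
  classical
  ext n
  rw [coeff_cmap]
  simp only [coeff_monomial]
  split_ifs with h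
  · rfl
  · rw [map_zero]

lemma cmap_C (π : L →ₗ[K] K) (c : L) : cmap π (C c : MvPolynomial σ L) = C (π c) := by
  rw [show (C c : MvPolynomial σ L) = monomial 0 c from rfl, cmap_monomial]; rfl

lemma cmap_one (π : L →ₗ[K] K) : cmap π (1 : MvPolynomial σ L) = C (π 1) := by
  rw [← cmap_C]; norm_num

lemma cmap_mul_map (π : L →ₗ[K] K) (p : MvPolynomial σ L) (r : MvPolynomial σ K) :
    cmap π (p * MvPolynomial.map (algebraMap K L) r) = cmap π p * r := by
  classical
  ext n
  rw [coeff_cmap, coeff_mul, coeff_mul, map_sum]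
  refine Finset.sum_congr rfl ?_
  rintro ⟨u, v⟩ _
  simp only [coeff_map, coeff_cmap]
  rw [mul_comm (coeff u p) _, ← Algebra.smul_def, map_smul, smul_eq_mul, mul_comm]

lemma cmap_map (π : L →ₗ[K] K) (r : MvPolynomial σ K) :
    cmap π (MvPolynomial.map (algebraMap K L) r) = C (π 1) * r := by
  rw [← one_mul (MvPolynomial.map (algebraMap K L) r), cmap_mul_map, cmap_one]

lemma cmap_rename (π : L →ₗ[K] K) (φ : σ → τ) (p : MvPolynomial σ L) :
    cmap π (rename φ p) = rename φ (cmap π p) := by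
  induction p using MvPolynomial.induction_on' with
  | monomial m c => rw [rename_monomial, cmap_monomial, cmap_monomial, rename_monomial]
  | add p q hp hq => rw [map_add, cmap_add, cmap_add, hp, hq, map_add]

lemma support_cmap_subset (π : L →ₗ[K] K) (p : MvPolynomial σ L) :
    (cmap π p).support ⊆ p.support := by
  intro m hm
  rw [mem_support_iff, coeff_cmap] at hm
  rw [mem_support_iff]
  intro h
  rw [h, map_zero] at hm
  exact hm rfl

lemma totalDegree_cmap_le (π : L →ₗ[K] K) (p : MvPolynomial σ L) :
    (cmap π p).totalDegree ≤ p.totalDegree := by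
  rw [totalDegree, totalDegree]
  exact Finset.sup_mono (support_cmap_subset π p)

lemma totalDegree_map_eq (p : MvPolynomial σ K) :
    (MvPolynomial.map (algebraMap K L) p).totalDegree = p.totalDegree := by
  rw [totalDegree, totalDegree,
    MvPolynomial.support_map_of_injective p (algebraMap K L).injective]

lemma cmap_finsum {ι : Type} (π : L →ₗ[K] K) (s : Finset ι) (f : ι → MvPolynomial σ L) :
    cmap π (∑ i ∈ s, f i) = ∑ i ∈ s, cmap π (f i) := by
  ext n
  rw [coeff_cmap, coeff_sum, coeff_sum, map_sum]
  simp [coeff_cmap]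

-- reconstruction with a basis
lemma cmap_reconstruct {d : ℕ} (b : Module.Basis (Fin d) K L) (p : MvPolynomial σ L) :
    ∑ j : Fin d, C (b j) * MvPolynomial.map (algebraMap K L) (cmap (b.coord j) p) = p := by
  ext n
  rw [coeff_sum]
  simp_rw [coeff_C_mul, coeff_map, coeff_cmap]
  have := b.sum_repr (coeff n p)
  calc ∑ j : Fin d, b j * algebraMap K L ((b.coord j) (coeff n p))
      = ∑ j : Fin d, b.repr (coeff n p) j • b j := by
        refine Finset.sum_congr rfl fun j _ => ?_
        rw [Algebra.smul_def, mul_comm]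
        rfl
    _ = coeff n p := b.sum_repr (coeff n p)

/-- The coefficient-projection of the ideal generated by a `K`-rational ideal lands in it. -/
lemma cmap_mem_of_mem_map {d : ℕ} (b : Module.Basis (Fin d) K L) (I : Ideal (MvPolynomial σ K))
    (p : MvPolynomial σ L) (hp : p ∈ Ideal.map (MvPolynomial.map (algebraMap K L)) I)
    (π : L →ₗ[K] K) : cmap π p ∈ I := by
  classical
  let M : Ideal (MvPolynomial σ L) :=
    { carrier := {x | ∀ π' : L →ₗ[K] K, cmap π' x ∈ I}
      add_mem' := fun hx hy π' => by rw [cmap_add]; exact I.add_mem (hx π') (hy π')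
      zero_mem' := fun π' => by rw [cmap_zero]; exact I.zero_mem
      smul_mem' := by
        intro c x hx π'
        simp only [smul_eq_mul, Set.mem_setOf_eq]
        have hcx : c * x = ∑ j : Fin d,
            (C (b j) * c) * MvPolynomial.map (algebraMap K L) (cmap (b.coord j) x) := by
          conv_lhs => rw [← cmap_reconstruct b x]
          rw [Finset.mul_sum]
          exact Finset.sum_congr rfl fun j _ => by ring
        rw [hcx, cmap_finsum]
        refine Ideal.sum_mem I fun j _ => ?_
        rw [cmap_mul_map]
        exact I.mul_mem_left _ (hx (b.coord j)) }
  have hle : Ideal.map (MvPolynomial.map (algebraMap K L)) I ≤ M := by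
    rw [Ideal.map_le_iff_le_comap]
    intro i hi
    intro π'
    rw [cmap_map]
    exact I.mul_mem_left _ hi
  exact hle hp π

lemma cmap_aeval (π : L →ₗ[K] K) (r : MvPolynomial σ K) (q : Polynomial L) :
    cmap π (Polynomial.aeval (MvPolynomial.map (algebraMap K L) r) q)
      = Polynomial.aeval r (q.sum fun e c => Polynomial.C (π c) * Polynomial.X ^ e) := by
  classical
  rw [Polynomial.aeval_def, Polynomial.eval₂_eq_sum, Polynomial.sum_def]
  simp_rw [MvPolynomial.algebraMap_eq, ← map_pow]
  rw [cmap_finsum]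
  simp_rw [cmap_mul_map, cmap_C]
  rw [Polynomial.sum_def, map_sum]
  refine Finset.sum_congr rfl fun e _ => ?_
  rw [map_mul, map_pow, Polynomial.aeval_C, Polynomial.aeval_X, MvPolynomial.algebraMap_eq]

end Cmap

section Main


lemma mem_sepPair {R A B T : Type} [CommSemiring R] [CommRing A] [CommRing B] [CommRing T]
    [Algebra R A] [Algebra R B] [Algebra R T]
    (ea : A →ₐ[R] T) (eb : B →ₐ[R] T) (I : Ideal T) (x : A × B) :
    x ∈ sepPair ea eb I ↔ ea x.1 - eb x.2 ∈ I := Iff.rfl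

lemma aeval_prod_fst {R A B : Type} [CommSemiring R] [CommRing A] [CommRing B]
    [Algebra R A] [Algebra R B] (x : A × B) (q : Polynomial R) :
    (Polynomial.aeval x q).1 = Polynomial.aeval x.1 q :=
  (Polynomial.aeval_algHom_apply (AlgHom.fst R A B) x q).symm

lemma aeval_prod_snd {R A B : Type} [CommSemiring R] [CommRing A] [CommRing B]
    [Algebra R A] [Algebra R B] (x : A × B) (q : Polynomial R) :
    (Polynomial.aeval x q).2 = Polynomial.aeval x.2 q :=
  (Polynomial.aeval_algHom_apply (AlgHom.snd R A B) x q).symm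

/-- Lemma 2 ("Lemma `lemma:alpha`"): if `α` is algebraic over `K`, `L = K(α)`, and the algebra
of separated elements of the ideal `J` generated by `I` in `L[X,Y]` is generated by a single
element as an `L`-algebra, then it has a generator with coefficients in `K`, and this generator
also generates `A(I)` as a `K`-algebra. -/
theorem sepPair_generator_descends (K : Type) [Field K] [CharZero K] (n m : ℕ)
    (L : Type) [Field L] [Algebra K L] (α : L)
    (halg : IsAlgebraic K α) (hgenα : Algebra.adjoin K {α} = (⊤ : Subalgebra K L))
    (I : Ideal (MvPolynomial (Fin n ⊕ Fin m) K))
    (J : Ideal (MvPolynomial (Fin n ⊕ Fin m) L))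
    (hJ : J = Ideal.map (MvPolynomial.map (algebraMap K L)) I)
    (hsimple : ∃ a, Algebra.adjoin L {a} = sepPair (rename Sum.inl) (rename Sum.inr) J) :
    ∃ (f : MvPolynomial (Fin n) K) (g : MvPolynomial (Fin m) K),
      Algebra.adjoin L {(MvPolynomial.map (algebraMap K L) f,
          MvPolynomial.map (algebraMap K L) g)} =
        sepPair (rename Sum.inl) (rename Sum.inr) J ∧
      Algebra.adjoin K {(f, g)} = sepPair (rename Sum.inl) (rename Sum.inr) I := by
  classical
  obtain ⟨a, ha⟩ := hsimple
  set S := sepPair (rename Sum.inl (R := L)) (rename Sum.inr) J with hSdef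
  set SK := sepPair (rename Sum.inl (R := K)) (rename Sum.inr) I with hSKdef
  -- power basis of L over K
  have hint : IsIntegral K α := halg.isIntegral
  let pb : PowerBasis K L := (Algebra.adjoin.powerBasis hint).map
    ((Subalgebra.equivOfEq _ _ hgenα).trans Subalgebra.topEquiv)
  let b : Module.Basis (Fin pb.dim) K L := pb.basis
  have hdimpos : 0 < pb.dim := pb.dim_pos
  let j₀ : Fin pb.dim := ⟨0, hdimpos⟩
  have hb0 : b j₀ = 1 := by
    rw [show b j₀ = pb.gen ^ (j₀ : ℕ) from pb.basis_eq_pow j₀]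
    norm_num
  have hc1 : b.coord j₀ 1 = 1 := by
    rw [← hb0, Module.Basis.coord_apply, Module.Basis.repr_self]
    simp
  -- notation
  let ι : K →+* L := algebraMap K L
  -- the coefficient projections, paired
  let Qf : Fin pb.dim → (MvPolynomial (Fin n) L × MvPolynomial (Fin m) L) →
      MvPolynomial (Fin n) K := fun j x => cmap (b.coord j) x.1
  let Qg : Fin pb.dim → (MvPolynomial (Fin n) L × MvPolynomial (Fin m) L) →
      MvPolynomial (Fin m) K := fun j x => cmap (b.coord j) x.2
  let Q : Fin pb.dim → (MvPolynomial (Fin n) L × MvPolynomial (Fin m) L) →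
      (MvPolynomial (Fin n) L × MvPolynomial (Fin m) L) := fun j x =>
    (MvPolynomial.map ι (Qf j x), MvPolynomial.map ι (Qg j x))
  -- (F1) : K-rational separatedness of projections
  have F1 : ∀ x ∈ S, ∀ j, rename Sum.inl (Qf j x) - rename Sum.inr (Qg j x) ∈ I := by
    intro x hx j
    rw [mem_sepPair] at hx
    have hmem : rename Sum.inl x.1 - rename Sum.inr x.2
        ∈ Ideal.map (MvPolynomial.map ι) I := by rw [← hJ]; exact hx
    have := cmap_mem_of_mem_map b I _ hmem (b.coord j)
    rwa [cmap_sub, cmap_rename, cmap_rename] at this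
  -- (F2) projections stay in S
  have F2 : ∀ x ∈ S, ∀ j, Q j x ∈ S := by
    intro x hx j
    rw [mem_sepPair]
    show rename Sum.inl (MvPolynomial.map ι (Qf j x))
        - rename Sum.inr (MvPolynomial.map ι (Qg j x)) ∈ J
    rw [← map_rename ι Sum.inl, ← map_rename ι Sum.inr, ← map_sub, hJ]
    exact Ideal.mem_map_of_mem _ (F1 x hx j)
  -- (F3) reconstruction
  have F3 : ∀ x : MvPolynomial (Fin n) L × MvPolynomial (Fin m) L,
      ∑ j : Fin pb.dim, algebraMap L _ (b j) * Q j x = x := by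
    intro x
    refine Prod.ext ?_ ?_
    · rw [Prod.fst_sum]
      simpa using cmap_reconstruct b x.1
    · rw [Prod.snd_sum]
      simpa using cmap_reconstruct b x.2
  have F4 : a ∈ S := ha ▸ Algebra.self_mem_adjoin_singleton L a
  rcases Nat.eq_zero_or_pos (a.1.totalDegree + a.2.totalDegree) with hE0 | hE
  · -- constant case
    have hf0 : a.1.totalDegree = 0 := by omega
    have hg0 : a.2.totalDegree = 0 := by omega
    have hfc : a.1 = C (coeff 0 a.1) := eq_C_of_totalDegree_zero hf0
    have hgc : a.2 = C (coeff 0 a.2) := eq_C_of_totalDegree_zero hg0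
    set c := coeff 0 a.1
    set d := coeff 0 a.2
    have hcd : (C (c - d) : MvPolynomial (Fin n ⊕ Fin m) L) ∈ J := by
      have := (mem_sepPair _ _ J a).mp F4
      rw [hfc, hgc, rename_C, rename_C, ← map_sub C] at this
      exact this
    rcases eq_or_ne c d with hceq | hcne
    · -- S = ⊥, take f = g = 0
      have habot : a = algebraMap L (MvPolynomial (Fin n) L × MvPolynomial (Fin m) L) c := by
        refine Prod.ext ?_ ?_
        · rw [hfc]; rfl
        · rw [hgc, ← hceq]; rfl
      have hSbot : S = ⊥ := by
        rw [← ha]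
        refine le_antisymm (Algebra.adjoin_le ?_) bot_le
        rw [Set.singleton_subset_iff, habot]
        exact Subalgebra.algebraMap_mem ⊥ c
      refine ⟨0, 0, ?_, ?_⟩
      · rw [map_zero, map_zero, hSbot]
        refine le_antisymm (Algebra.adjoin_le ?_) bot_le
        rw [Set.singleton_subset_iff]
        exact Subalgebra.zero_mem ⊥
      · refine le_antisymm (Algebra.adjoin_le ?_) ?_
        · rw [Set.singleton_subset_iff, SetLike.mem_coe, mem_sepPair]
          simp
        · intro x hx
          have hmx : (MvPolynomial.map ι x.1, MvPolynomial.map ι x.2) ∈ S := by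
            rw [mem_sepPair]
            show rename Sum.inl (MvPolynomial.map ι x.1)
                - rename Sum.inr (MvPolynomial.map ι x.2) ∈ J
            rw [← map_rename ι Sum.inl, ← map_rename ι Sum.inr, ← map_sub, hJ]
            exact Ideal.mem_map_of_mem _ ((mem_sepPair _ _ I x).mp hx)
          rw [hSbot, Algebra.mem_bot] at hmx
          obtain ⟨w, hw⟩ := hmx
          have hw1 : MvPolynomial.map ι x.1 = C w := congrArg Prod.fst hw.symm
          have hw2 : MvPolynomial.map ι x.2 = C w := congrArg Prod.snd hw.symm
          have hx1 : x.1 = C (b.coord j₀ w) := by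
            have := cmap_map (b.coord j₀) x.1
            rw [hw1, cmap_C, hc1, map_one, one_mul] at this
            exact this.symm
          have hx2 : x.2 = C (b.coord j₀ w) := by
            have := cmap_map (b.coord j₀) x.2
            rw [hw2, cmap_C, hc1, map_one, one_mul] at this
            exact this.symm
          have : x = algebraMap K _ (b.coord j₀ w) := by
            refine Prod.ext ?_ ?_
            · rw [hx1]; rfl
            · rw [hx2]; rfl
          rw [this]
          exact Subalgebra.algebraMap_mem _ _
    · -- c ≠ d : everything is ⊤ and n = m = 0
      have hJtop : J = ⊤ := Ideal.eq_top_of_isUnit_mem J hcd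
        (IsUnit.map (C : L →+* MvPolynomial (Fin n ⊕ Fin m) L)
          (isUnit_iff_ne_zero.mpr (sub_ne_zero_of_ne hcne)))
      have hItop : I = ⊤ := by
        rw [Ideal.eq_top_iff_one]
        have h1J : (1 : MvPolynomial (Fin n ⊕ Fin m) L) ∈ Ideal.map (MvPolynomial.map ι) I := by
          rw [← hJ, hJtop]; trivial
        have := cmap_mem_of_mem_map b I _ h1J (b.coord j₀)
        rwa [cmap_one, hc1, MvPolynomial.C_1] at this
      have hStop : S = ⊤ := by
        refine le_antisymm le_top ?_
        intro x _
        rw [mem_sepPair, hJtop]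
        trivial
      have hn : n = 0 := by
        by_contra hn
        have hbotmem : a ∈ Subalgebra.prod (⊥ : Subalgebra L (MvPolynomial (Fin n) L))
            (⊥ : Subalgebra L (MvPolynomial (Fin m) L)) := by
          rw [Subalgebra.mem_prod]
          constructor
          · rw [Algebra.mem_bot]; exact ⟨c, hfc.symm⟩
          · rw [Algebra.mem_bot]; exact ⟨d, hgc.symm⟩
        have htople : (⊤ : Subalgebra L (MvPolynomial (Fin n) L × MvPolynomial (Fin m) L))
            ≤ Subalgebra.prod ⊥ ⊥ := by
          rw [← hStop, ← ha]
          exact Algebra.adjoin_le (Set.singleton_subset_iff.mpr hbotmem)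
        have hX : ((X ⟨0, Nat.pos_of_ne_zero hn⟩ : MvPolynomial (Fin n) L), (0 : MvPolynomial (Fin m) L))
            ∈ Subalgebra.prod (⊥ : Subalgebra L (MvPolynomial (Fin n) L)) ⊥ := htople trivial
        rw [Subalgebra.mem_prod, Algebra.mem_bot] at hX
        obtain ⟨⟨w, hw⟩, -⟩ := hX
        have hw2 : (C w : MvPolynomial (Fin n) L) = X ⟨0, Nat.pos_of_ne_zero hn⟩ := hw
        have : coeff (Finsupp.single (⟨0, Nat.pos_of_ne_zero hn⟩ : Fin n) 1)
            (X (R := L) (⟨0, Nat.pos_of_ne_zero hn⟩ : Fin n)) = 1 := by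
          simp [coeff_X]
        rw [← hw2, coeff_C, if_neg (fun h => one_ne_zero (Finsupp.single_eq_zero.mp h.symm))] at this
        exact one_ne_zero this.symm
      have hm : m = 0 := by
        by_contra hm
        have hbotmem : a ∈ Subalgebra.prod (⊥ : Subalgebra L (MvPolynomial (Fin n) L))
            (⊥ : Subalgebra L (MvPolynomial (Fin m) L)) := by
          rw [Subalgebra.mem_prod]
          constructor
          · rw [Algebra.mem_bot]; exact ⟨c, hfc.symm⟩
          · rw [Algebra.mem_bot]; exact ⟨d, hgc.symm⟩
        have htople : (⊤ : Subalgebra L (MvPolynomial (Fin n) L × MvPolynomial (Fin m) L))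
            ≤ Subalgebra.prod ⊥ ⊥ := by
          rw [← hStop, ← ha]
          exact Algebra.adjoin_le (Set.singleton_subset_iff.mpr hbotmem)
        have hX : ((0 : MvPolynomial (Fin n) L), (X ⟨0, Nat.pos_of_ne_zero hm⟩ : MvPolynomial (Fin m) L))
            ∈ Subalgebra.prod (⊥ : Subalgebra L (MvPolynomial (Fin n) L)) ⊥ := htople trivial
        rw [Subalgebra.mem_prod, Algebra.mem_bot] at hX
        obtain ⟨-, ⟨w, hw⟩⟩ := hX
        have hw2 : (C w : MvPolynomial (Fin m) L) = X ⟨0, Nat.pos_of_ne_zero hm⟩ := hw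
        have : coeff (Finsupp.single (⟨0, Nat.pos_of_ne_zero hm⟩ : Fin m) 1)
            (X (R := L) (⟨0, Nat.pos_of_ne_zero hm⟩ : Fin m)) = 1 := by
          simp [coeff_X]
        rw [← hw2, coeff_C, if_neg (fun h => one_ne_zero (Finsupp.single_eq_zero.mp h.symm))] at this
        exact one_ne_zero this.symm
      subst hn hm
      -- now both polynomial rings are "constants"; use the generator (1, 0)
      have hgen : ∀ (F : Type) (_ : Field F),
          Algebra.adjoin F {((1 : MvPolynomial (Fin 0) F), (0 : MvPolynomial (Fin 0) F))}
            = ⊤ := by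
        intro F hF
        refine le_antisymm le_top ?_
        intro x _
        obtain ⟨u, hu⟩ := C_surjective (Fin 0) x.1
        obtain ⟨v, hv⟩ := C_surjective (Fin 0) x.2
        have hxx : x = algebraMap F _ u * ((1 : MvPolynomial (Fin 0) F), (0 : MvPolynomial (Fin 0) F))
            + algebraMap F _ v * (1 - ((1 : MvPolynomial (Fin 0) F), (0 : MvPolynomial (Fin 0) F))) := by
          refine Prod.ext ?_ ?_ <;>
            simp [← hu, ← hv, Prod.fst_mul, Prod.snd_mul]
        rw [hxx]
        have hmem1 : ((1 : MvPolynomial (Fin 0) F), (0 : MvPolynomial (Fin 0) F))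
            ∈ Algebra.adjoin F {((1 : MvPolynomial (Fin 0) F), (0 : MvPolynomial (Fin 0) F))} :=
          Algebra.self_mem_adjoin_singleton F _
        exact Subalgebra.add_mem _
          (Subalgebra.mul_mem _ (Subalgebra.algebraMap_mem _ u) hmem1)
          (Subalgebra.mul_mem _ (Subalgebra.algebraMap_mem _ v)
            (Subalgebra.sub_mem _ (Subalgebra.one_mem _) hmem1))
      refine ⟨1, 0, ?_, ?_⟩
      · rw [map_one, map_zero, hStop]
        exact hgen L inferInstance
      · have hSKtop : SK = ⊤ := by
          refine le_antisymm le_top ?_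
          intro x _
          rw [mem_sepPair, hItop]
          trivial
        rw [hgen K inferInstance, hSKtop]
  · -- main case
    set E := a.1.totalDegree + a.2.totalDegree with hEdef
    have hrange : ∀ x, x ∈ S ↔ ∃ q : Polynomial L, Polynomial.aeval a q = x := by
      intro x
      rw [← ha, Algebra.adjoin_singleton_eq_range_aeval, AlgHom.mem_range]
    have hdeg : ∀ q : Polynomial L,
        (Polynomial.aeval a q).1.totalDegree + (Polynomial.aeval a q).2.totalDegree
          = q.natDegree * E := by
      intro q
      rw [aeval_prod_fst, aeval_prod_snd, totalDegree_aeval, totalDegree_aeval, hEdef,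
        Nat.mul_add]
    have hQdeg : ∀ j, (Q j a).1.totalDegree + (Q j a).2.totalDegree ≤ E := by
      intro j
      have l1 : (Q j a).1.totalDegree ≤ a.1.totalDegree := by
        show (MvPolynomial.map ι (Qf j a)).totalDegree ≤ _
        rw [totalDegree_map_eq]
        exact totalDegree_cmap_le _ _
      have l2 : (Q j a).2.totalDegree ≤ a.2.totalDegree := by
        show (MvPolynomial.map ι (Qg j a)).totalDegree ≤ _
        rw [totalDegree_map_eq]
        exact totalDegree_cmap_le _ _
      omega
    have hq : ∀ j, ∃ q : Polynomial L, Polynomial.aeval a q = Q j a ∧ q.natDegree ≤ 1 := by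
      intro j
      obtain ⟨q, hqe⟩ := (hrange _).mp (F2 a F4 j)
      refine ⟨q, hqe, ?_⟩
      have h1 := hdeg q
      rw [hqe] at h1
      have hle := hQdeg j
      have h2 : q.natDegree * E ≤ 1 * E := by rw [one_mul, ← h1]; exact hle
      exact Nat.le_of_mul_le_mul_right h2 hE
    choose qs hqs hqsdeg using hq
    have hQform : ∀ j, Q j a
        = algebraMap L _ ((qs j).coeff 1) * a + algebraMap L _ ((qs j).coeff 0) := by
      intro j
      rw [← hqs j]
      conv_lhs => rw [Polynomial.eq_X_add_C_of_natDegree_le_one (hqsdeg j)]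
      rw [map_add, map_mul, Polynomial.aeval_C, Polynomial.aeval_C, Polynomial.aeval_X]
    have hau : algebraMap L _ (∑ j, b j * (qs j).coeff 1) * a
        + algebraMap L _ (∑ j, b j * (qs j).coeff 0) = a := by
      rw [map_sum, map_sum, Finset.sum_mul, ← Finset.sum_add_distrib]
      conv_rhs => rw [← F3 a]
      refine Finset.sum_congr rfl fun j _ => ?_
      rw [hQform j, map_mul, map_mul]
      ring
    have hex : ∃ j, (qs j).coeff 1 ≠ 0 := by
      by_contra hall
      push_neg at hall
      have hu0 : (∑ j, b j * (qs j).coeff 1) = 0 :=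
        Finset.sum_eq_zero fun j _ => by rw [hall j, mul_zero]
      rw [hu0, map_zero, zero_mul, zero_add] at hau
      have h1 : a.1 = C (∑ j, b j * (qs j).coeff 0) := congrArg Prod.fst hau.symm
      have h2 : a.2 = C (∑ j, b j * (qs j).coeff 0) := congrArg Prod.snd hau.symm
      have e1 : a.1.totalDegree = 0 := by rw [h1]; exact totalDegree_C _
      have e2 : a.2.totalDegree = 0 := by rw [h2]; exact totalDegree_C _
      omega
    obtain ⟨j, hl⟩ := hex
    have hBS : Q j a ∈ S := F2 a F4 j
    set B : MvPolynomial (Fin n) L × MvPolynomial (Fin m) L :=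
      (MvPolynomial.map ι (Qf j a), MvPolynomial.map ι (Qg j a)) with hBd
    have hgoal1 : Algebra.adjoin L {B} = S := by
      refine le_antisymm (Algebra.adjoin_le ?_) ?_
      · rw [Set.singleton_subset_iff, SetLike.mem_coe]
        exact hBS
      · rw [← ha]
        refine Algebra.adjoin_le ?_
        rw [Set.singleton_subset_iff, SetLike.mem_coe]
        have hB : a = algebraMap L _ ((qs j).coeff 1)⁻¹ *
            (B - algebraMap L _ ((qs j).coeff 0)) := by
          rw [show B = Q j a from rfl,
            hQform j, add_sub_cancel_right, ← mul_assoc, ← map_mul, inv_mul_cancel₀ hl,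
            map_one, one_mul]
        rw [hB]
        exact Subalgebra.mul_mem _ (Subalgebra.algebraMap_mem _ _)
          (Subalgebra.sub_mem _ (Algebra.self_mem_adjoin_singleton L _)
            (Subalgebra.algebraMap_mem _ _))
    refine ⟨Qf j a, Qg j a, hgoal1, ?_⟩
    refine le_antisymm (Algebra.adjoin_le ?_) ?_
    · rw [Set.singleton_subset_iff, SetLike.mem_coe, mem_sepPair]
      exact F1 a F4 j
    · intro x hx
      have hmx : (MvPolynomial.map ι x.1, MvPolynomial.map ι x.2) ∈ S := by
        rw [mem_sepPair]
        show rename Sum.inl (MvPolynomial.map ι x.1)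
            - rename Sum.inr (MvPolynomial.map ι x.2) ∈ J
        rw [← map_rename ι Sum.inl, ← map_rename ι Sum.inr, ← map_sub, hJ]
        exact Ideal.mem_map_of_mem _ ((mem_sepPair _ _ I x).mp hx)
      rw [← hgoal1, Algebra.adjoin_singleton_eq_range_aeval, AlgHom.mem_range] at hmx
      obtain ⟨q, hqq⟩ := hmx
      set pq : Polynomial K := q.sum fun e c => Polynomial.C (b.coord j₀ c) * Polynomial.X ^ e
        with hpq
      have hx1 : x.1 = Polynomial.aeval (Qf j a) pq := by
        have e1 : cmap (b.coord j₀) (MvPolynomial.map ι x.1) = x.1 := by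
          rw [cmap_map, hc1, MvPolynomial.C_1, one_mul]
        calc x.1 = cmap (b.coord j₀) (MvPolynomial.map ι x.1) := e1.symm
          _ = cmap (b.coord j₀) (Polynomial.aeval B.1 q) := by
              rw [← aeval_prod_fst B q, hqq]
          _ = Polynomial.aeval (Qf j a) pq := cmap_aeval _ _ _
      have hx2 : x.2 = Polynomial.aeval (Qg j a) pq := by
        have e1 : cmap (b.coord j₀) (MvPolynomial.map ι x.2) = x.2 := by
          rw [cmap_map, hc1, MvPolynomial.C_1, one_mul]
        calc x.2 = cmap (b.coord j₀) (MvPolynomial.map ι x.2) := e1.symm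
          _ = cmap (b.coord j₀) (Polynomial.aeval B.2 q) := by
              rw [← aeval_prod_snd B q, hqq]
          _ = Polynomial.aeval (Qg j a) pq := cmap_aeval _ _ _
      have hxev : x = Polynomial.aeval (Qf j a, Qg j a) pq := by
        refine Prod.ext ?_ ?_
        · rw [aeval_prod_fst]; exact hx1
        · rw [aeval_prod_snd]; exact hx2
      rw [hxev, Algebra.adjoin_singleton_eq_range_aeval]
      exact ⟨pq, rfl⟩
end Main
end

section
/- Let F ∈ K[X,Y][s] and G ∈ K[X,Y][t] satisfy [s⁰]F = 0 and [t⁰]G = 0, and suppose that F − G, viewed as an element of K[X,Y][s,t], has no factor in K[X,Y]. If u₀,…,u_k ∈ K(X,Y) are such that u₀·(1,1) + u₁·(F,G) + ⋯ + u_k·(F^k,G^k), a priori an element of K(X,Y)[s] × K(X,Y)[t], has all coefficients in K[X,Y] in both components, then u₀,…,u_k all lie in K[X,Y]. -/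
open MvPolynomial

open Polynomial

/-- Key vanishing lemma: if some `r i` is not divisible by the prime `p`,
then `p` divides all coefficients of `F`. -/
lemma aux_vanish {R : Type*} [CommRing R] [IsDomain R]
    (F : R[X]) (hF0 : F.coeff 0 = 0) (k : ℕ)
    (u : Fin (k+1) → FractionRing R)
    (hF : ∀ j, (∑ i : Fin (k+1), Polynomial.C (u i) *
        (F.map (algebraMap R (FractionRing R))) ^ (i : ℕ)).coeff j ∈
        (algebraMap R (FractionRing R)).range)
    (p c : R) (hp : Prime p) (hpc : p ∣ c)
    (r : Fin (k+1) → R)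
    (hr : ∀ i, algebraMap R (FractionRing R) c * u i = algebraMap R (FractionRing R) (r i))
    (i₀ : Fin (k+1)) (hi₀ : ¬ p ∣ r i₀) :
    ∀ j, p ∣ F.coeff j := by
  -- lift the integral polynomial
  have hlift : (∑ i : Fin (k+1), Polynomial.C (u i) *
      (F.map (algebraMap R (FractionRing R))) ^ (i : ℕ)) ∈
      Polynomial.lifts (algebraMap R (FractionRing R)) := by
    rw [Polynomial.lifts_iff_coeff_lifts]
    intro j
    obtain ⟨v, hv⟩ := hF j
    exact ⟨v, hv⟩
  obtain ⟨V, hV⟩ := (Polynomial.mem_lifts _).mp hlift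
  have hinj : Function.Injective (algebraMap R (FractionRing R)) :=
    IsFractionRing.injective R (FractionRing R)
  have key : ∑ i : Fin (k+1), Polynomial.C (r i) * F ^ (i : ℕ) = Polynomial.C c * V := by
    apply Polynomial.map_injective (algebraMap R (FractionRing R)) hinj
    rw [Polynomial.map_mul, Polynomial.map_C, hV, Finset.mul_sum, Polynomial.map_sum]
    refine Finset.sum_congr rfl fun i _ => ?_
    rw [Polynomial.map_mul, Polynomial.map_C, Polynomial.map_pow, ← mul_assoc,
      ← Polynomial.map_C (algebraMap R (FractionRing R)), ← Polynomial.C_mul, hr]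
    simp
  -- reduce mod p
  haveI hprime : (Ideal.span {p}).IsPrime := (Ideal.span_singleton_prime hp.ne_zero).mpr hp
  set q := Ideal.Quotient.mk (Ideal.span {p}) with hq
  have hqc : q c = 0 := by
    rw [Ideal.Quotient.eq_zero_iff_mem, Ideal.mem_span_singleton]
    exact hpc
  have hred : ∑ i : Fin (k+1), Polynomial.C (q (r i)) * (F.map q) ^ (i : ℕ) = 0 := by
    have h2 := congrArg (Polynomial.map q) key
    rw [Polynomial.map_mul, Polynomial.map_C, hqc, Polynomial.C_0, zero_mul,
      Polynomial.map_sum] at h2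
    rw [← h2]
    refine Finset.sum_congr rfl fun i _ => ?_
    rw [Polynomial.map_mul, Polynomial.map_C, Polynomial.map_pow]
  set P : Polynomial (R ⧸ Ideal.span {p}) :=
    ∑ i : Fin (k+1), Polynomial.C (q (r i)) * Polynomial.X ^ (i : ℕ) with hP
  have hcomp : P.comp (F.map q) = 0 := by
    rw [hP, Polynomial.comp, Polynomial.eval₂_finset_sum]
    rw [← hred]
    refine Finset.sum_congr rfl fun i _ => ?_
    rw [Polynomial.eval₂_mul, Polynomial.eval₂_C, Polynomial.eval₂_X_pow]
  have hPc : P.coeff (i₀ : ℕ) = q (r i₀) := by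
    rw [hP, Polynomial.finset_sum_coeff]
    rw [Finset.sum_eq_single i₀]
    · simp
    · intro b _ hb
      rw [Polynomial.coeff_C_mul, Polynomial.coeff_X_pow, if_neg, mul_zero]
      exact fun h => hb (Fin.val_injective h).symm
    · simp
  have hqr : q (r i₀) ≠ 0 := by
    rw [Ne, Ideal.Quotient.eq_zero_iff_mem, Ideal.mem_span_singleton]
    exact hi₀
  rcases Polynomial.comp_eq_zero_iff.mp hcomp with hP0 | ⟨_, hQ⟩
  · exact absurd (hP0 ▸ hPc).symm hqr
  · have hc0 : (F.map q).coeff 0 = 0 := by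
      rw [Polynomial.coeff_map, hF0, map_zero]
    rw [hc0, Polynomial.C_0] at hQ
    intro j
    have h3 : (F.map q).coeff j = 0 := by rw [hQ, Polynomial.coeff_zero]
    rw [Polynomial.coeff_map] at h3
    rw [← Ideal.mem_span_singleton, ← Ideal.Quotient.eq_zero_iff_mem]
    exact h3


/-- Lemma 4 ("Lemma `lemma:2a`"): let `F ∈ K[X,Y][s]`, `G ∈ K[X,Y][t]` with
`[s⁰]F = [t⁰]G = 0`, and suppose `F - G`, viewed in `K[X,Y][s,t] = (K[X,Y][s])[t]`,
has no factor in `K[X,Y]`.  If `u₀, …, u_k ∈ K(X,Y)` are such that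
`u₀·(1,1) + u₁·(F,G) + ⋯ + u_k·(F^k,G^k)` has all coefficients in `K[X,Y]` in both
components, then `u₀, …, u_k ∈ K[X,Y]`. -/
theorem coeffs_in_ring_of_separated_combination (K : Type) [Field K] [CharZero K] (n m : ℕ)
    (F G : Polynomial (MvPolynomial (Fin n ⊕ Fin m) K))
    (hF0 : F.coeff 0 = 0) (hG0 : G.coeff 0 = 0)
    (hnofac : ∀ c : MvPolynomial (Fin n ⊕ Fin m) K,
      Polynomial.C (Polynomial.C c) ∣ (Polynomial.C F - G.map Polynomial.C) → IsUnit c)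
    (k : ℕ) (u : Fin (k + 1) → FractionRing (MvPolynomial (Fin n ⊕ Fin m) K))
    (hF : ∀ j, (∑ i : Fin (k + 1), Polynomial.C (u i) *
        (F.map (algebraMap (MvPolynomial (Fin n ⊕ Fin m) K)
          (FractionRing (MvPolynomial (Fin n ⊕ Fin m) K)))) ^ (i : ℕ)).coeff j ∈
        (algebraMap (MvPolynomial (Fin n ⊕ Fin m) K)
          (FractionRing (MvPolynomial (Fin n ⊕ Fin m) K))).range)
    (hG : ∀ j, (∑ i : Fin (k + 1), Polynomial.C (u i) *
        (G.map (algebraMap (MvPolynomial (Fin n ⊕ Fin m) K)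
          (FractionRing (MvPolynomial (Fin n ⊕ Fin m) K)))) ^ (i : ℕ)).coeff j ∈
        (algebraMap (MvPolynomial (Fin n ⊕ Fin m) K)
          (FractionRing (MvPolynomial (Fin n ⊕ Fin m) K))).range) :
    ∀ i, u i ∈ (algebraMap (MvPolynomial (Fin n ⊕ Fin m) K)
      (FractionRing (MvPolynomial (Fin n ⊕ Fin m) K))).range := by
  set R := MvPolynomial (Fin n ⊕ Fin m) K with hR
  -- core: for any prime p dividing a common denominator, p divides all numerators
  have core : ∀ (p c : R), Prime p → p ∣ c →
      ∀ (r : Fin (k+1) → R),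
      (∀ i, algebraMap R (FractionRing R) c * u i = algebraMap R (FractionRing R) (r i)) →
      ∀ i, p ∣ r i := by
    intro p c hp hpc r hr
    by_contra h
    push_neg at h
    obtain ⟨i₀, hi₀⟩ := h
    have hFd := aux_vanish F hF0 k u hF p c hp hpc r hr i₀ hi₀
    have hGd := aux_vanish G hG0 k u hG p c hp hpc r hr i₀ hi₀
    have hdvd : Polynomial.C (Polynomial.C p) ∣ (Polynomial.C F - G.map Polynomial.C) := by
      rw [Polynomial.C_dvd_iff_dvd_coeff]
      intro t
      rw [Polynomial.C_dvd_iff_dvd_coeff]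
      intro s
      rw [Polynomial.coeff_sub, Polynomial.coeff_sub, Polynomial.coeff_C,
        Polynomial.coeff_map, Polynomial.coeff_C]
      refine dvd_sub ?_ ?_
      · split_ifs with ht
        · exact hFd s
        · simp
      · split_ifs with hs
        · exact hGd t
        · simp
    exact hp.not_unit (hnofac p hdvd)
  -- common denominator
  obtain ⟨b, hb⟩ := IsLocalization.exist_integer_multiples (nonZeroDivisors R)
    Finset.univ u
  have hbne : (b : R) ≠ 0 := nonZeroDivisors.coe_ne_zero b
  have main : ∀ b : R, b ≠ 0 →
      (∀ i, ∃ r : R, algebraMap R (FractionRing R) b * u i = algebraMap R (FractionRing R) r) →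
      ∀ i, u i ∈ (algebraMap R (FractionRing R)).range := by
    intro b
    induction b using UniqueFactorizationMonoid.induction_on_prime with
    | h₁ => intro h; exact absurd rfl h
    | h₂ x hx =>
      intro _ h i
      obtain ⟨r, hrr⟩ := h i
      refine ⟨(hx.unit⁻¹ : Rˣ) * r, ?_⟩
      rw [map_mul, ← hrr, ← mul_assoc, ← map_mul]
      rw [hx.val_inv_mul, map_one, one_mul]
    | h₃ a p ha hp ih =>
      intro _ h
      choose r hr using h
      have hpr := core p (p * a) hp ⟨a, rfl⟩ r hr
      apply ih ha
      intro i
      obtain ⟨r', hr'⟩ := hpr i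
      refine ⟨r', ?_⟩
      have hpne : algebraMap R (FractionRing R) p ≠ 0 := by
        rw [Ne, map_eq_zero_iff _ (IsFractionRing.injective R (FractionRing R))]
        exact hp.ne_zero
      apply mul_left_cancel₀ hpne
      rw [← mul_assoc, ← map_mul, hr i, hr', map_mul]
  apply main b hbne
  intro i
  obtain ⟨v, hv⟩ := hb i (Finset.mem_univ i)
  rw [Algebra.smul_def] at hv
  exact ⟨v, hv.symm⟩
end

section
/- Let F ∈ K[X,Y][s] with [s⁰]F = 0, and let k be a positive integer. If the coefficient [sⁱ]F^k lies in K[X] for every i > (k−1)·deg_s F, then every coefficient of F lies in K[X], i.e., F ∈ K[X][s]. -/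
open MvPolynomial


variable {σ : Type*} {R : Type*} [CommSemiring R]

lemma coeff_pderiv' [DecidableEq σ] (j : σ) (τ : σ →₀ ℕ) (p : MvPolynomial σ R) :
    MvPolynomial.coeff τ (pderiv j p) =
      ((τ j : R) + 1) * MvPolynomial.coeff (τ + Finsupp.single j 1) p := by
  induction p using MvPolynomial.induction_on' with
  | monomial s a =>
    rw [pderiv_monomial, MvPolynomial.coeff_monomial, MvPolynomial.coeff_monomial]
    by_cases h : s j = 0
    · have hne : ¬ s = τ + Finsupp.single j 1 := by
        intro hs
        have := congrArg (fun f => f j) hs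
        simp [h] at this
      simp [h, hne]
    · have hle : Finsupp.single j 1 ≤ s := by
        rw [Finsupp.single_le_iff]
        omega
      have hiff : s - Finsupp.single j 1 = τ ↔ s = τ + Finsupp.single j 1 :=
        tsub_eq_iff_eq_add_of_le hle
      by_cases h2 : s - Finsupp.single j 1 = τ
      · have hs : s = τ + Finsupp.single j 1 := hiff.mp h2
        have hsj : s j = τ j + 1 := by
          rw [hs]; simp
        rw [if_pos h2, if_pos hs, hsj]
        push_cast
        ring
      · have : ¬ s = τ + Finsupp.single j 1 := fun hs => h2 (hiff.mpr hs)
        simp [h2, this]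
  | add p q hp hq =>
    simp [map_add, hp, hq, mul_add]

lemma not_mem_vars_of_pderiv_eq_zero [CharZero R] [NoZeroDivisors R] [DecidableEq σ]
    {j : σ} {p : MvPolynomial σ R} (h : pderiv j p = 0) : j ∉ p.vars := by
  intro hj
  obtain ⟨d, hd, hjd⟩ := (MvPolynomial.mem_vars j).mp hj
  have hdj : d j ≠ 0 := Finsupp.mem_support_iff.mp hjd
  have hle : Finsupp.single j 1 ≤ d := by rw [Finsupp.single_le_iff]; omega
  have key := coeff_pderiv' j (d - Finsupp.single j 1) p
  rw [h, tsub_add_cancel_of_le hle, MvPolynomial.coeff_zero] at key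
  have hne : (((((d - Finsupp.single j 1 : σ →₀ ℕ) j : ℕ)) : R) + 1) ≠ 0 :=
    Nat.cast_add_one_ne_zero _
  rcases mul_eq_zero.mp key.symm with h1 | h1
  · exact hne h1
  · exact Finsupp.mem_support_iff.mp hd h1

/-- Coefficient-wise partial derivative on `Polynomial (MvPolynomial σ R)`. -/
noncomputable def cpderiv [DecidableEq σ] (j : σ) (F : Polynomial (MvPolynomial σ R)) :
    Polynomial (MvPolynomial σ R) :=
  ⟨AddMonoidAlgebra.ofCoeff (Finsupp.mapRange (pderiv j) (map_zero _) F.toFinsupp.coeff)⟩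

lemma cpderiv_coeff [DecidableEq σ] (j : σ) (F : Polynomial (MvPolynomial σ R)) (i : ℕ) :
    (cpderiv j F).coeff i = pderiv j (F.coeff i) := rfl

lemma cpderiv_mul [DecidableEq σ] (j : σ) (F G : Polynomial (MvPolynomial σ R)) :
    cpderiv j (F * G) = cpderiv j F * G + F * cpderiv j G := by
  ext i
  simp only [cpderiv_coeff, Polynomial.coeff_add, Polynomial.coeff_mul, map_sum, pderiv_mul]
  rw [← Finset.sum_add_distrib]

lemma cpderiv_pow [DecidableEq σ] (j : σ) (F : Polynomial (MvPolynomial σ R)) :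
    ∀ k : ℕ, 0 < k → cpderiv j (F ^ k) = (k : Polynomial (MvPolynomial σ R)) * F ^ (k - 1) * cpderiv j F := by
  intro k
  induction k with
  | zero => intro h; omega
  | succ k ih =>
    intro _
    rcases Nat.eq_zero_or_pos k with hk | hk
    · subst hk; simp
    · rw [pow_succ, mul_comm (F ^ k) F, cpderiv_mul, ih hk]
      have hF : F * F ^ (k - 1) = F ^ k := by
        rw [← pow_succ']; congr 1; omega
      have h2 : F * ((k : Polynomial (MvPolynomial σ R)) * F ^ (k - 1) * cpderiv j F)
          = (k : Polynomial (MvPolynomial σ R)) * F ^ k * cpderiv j F := by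
        rw [← hF]; ring
      rw [h2, show k + 1 - 1 = k from rfl]
      push_cast
      ring

/-- Lemma 5 ("Lemma `lemma:1`"): let `F ∈ K[X,Y][s]` with `[s⁰]F = 0` and let `k ≥ 1`.
If the coefficient `[sⁱ]F^k` lies in `K[X]` for every `i > (k-1)·deg_s F`, then every
coefficient of `F` lies in `K[X]`, i.e. `F ∈ K[X][s]`. -/
theorem coeffs_in_KX_of_high_coeffs_of_power (K : Type) [Field K] [CharZero K] (n m : ℕ)
    (F : Polynomial (MvPolynomial (Fin n ⊕ Fin m) K))
    (hF0 : F.coeff 0 = 0) (k : ℕ) (hk : 0 < k)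
    (h : ∀ i, (k - 1) * F.natDegree < i →
      (F ^ k).coeff i ∈ supported K (Set.range (Sum.inl : Fin n → Fin n ⊕ Fin m))) :
    ∀ i, F.coeff i ∈ supported K (Set.range (Sum.inl : Fin n → Fin n ⊕ Fin m)) := by
  classical
  by_cases hF : F = 0
  · intro i
    rw [hF, Polynomial.coeff_zero]
    exact Subalgebra.zero_mem _
  have main : ∀ j : Fin m, cpderiv (Sum.inr j) F = 0 := by
    intro j
    have hco : ∀ i', (k - 1) * F.natDegree < i' →
        (cpderiv (Sum.inr j) (F ^ k)).coeff i' = 0 := by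
      intro i' hi'
      rw [cpderiv_coeff]
      apply pderiv_eq_zero_of_notMem_vars
      intro hmem
      obtain ⟨t, ht⟩ := (mem_supported.mp (h i' hi')) (Finset.mem_coe.mpr hmem)
      exact Sum.inl_ne_inr ht
    have hdeg : (cpderiv (Sum.inr j) (F ^ k)).natDegree ≤ (k - 1) * F.natDegree :=
      Polynomial.natDegree_le_iff_coeff_eq_zero.mpr hco
    rw [cpderiv_pow _ _ k hk] at hdeg
    by_contra hD
    have hkne : (k : Polynomial (MvPolynomial (Fin n ⊕ Fin m) K)) ≠ 0 :=
      Nat.cast_ne_zero.mpr hk.ne'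
    have hFk : F ^ (k - 1) ≠ 0 := pow_ne_zero _ hF
    rw [Polynomial.natDegree_mul (mul_ne_zero hkne hFk) hD,
      Polynomial.natDegree_mul hkne hFk, Polynomial.natDegree_natCast,
      Polynomial.natDegree_pow] at hdeg
    have hd0 : (cpderiv (Sum.inr j) F).natDegree = 0 := by omega
    have heq : cpderiv (Sum.inr j) F =
        Polynomial.C ((cpderiv (Sum.inr j) F).coeff 0) :=
      Polynomial.eq_C_of_natDegree_eq_zero hd0
    rw [cpderiv_coeff, hF0, map_zero, map_zero] at heq
    exact hD heq
  intro i
  rw [mem_supported]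
  intro v hv
  cases v with
  | inl t => exact ⟨t, rfl⟩
  | inr j =>
    exfalso
    have hz : pderiv (Sum.inr j) (F.coeff i) = 0 := by
      rw [← cpderiv_coeff, main j, Polynomial.coeff_zero]
    exact not_mem_vars_of_pderiv_eq_zero hz hv
end

section
/- Let f, F ∈ K[X] and g, G ∈ K[Y] be non-constant polynomials. Then the following are equivalent: (1) there exists a univariate polynomial h ∈ K[t] such that F = h(f) and G = h(g); (2) f − g divides F − G in K[X,Y]. -/
open MvPolynomial

namespace FriedMacRaeProof

variable {K : Type} [Field K]

section MapCoeffs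

variable {τ R₁ R₂ : Type} [CommSemiring R₁] [CommSemiring R₂]
  [Algebra K R₁] [Algebra K R₂]

private lemma mapRange_coeff (φ : R₁ →ₗ[K] R₂) (u : MvPolynomial τ R₁) (m : τ →₀ ℕ) :
    coeff m (AddMonoidAlgebra.map φ.toAddMonoidHom u : MvPolynomial τ R₂) = φ (coeff m u) :=
  coeff_addMonoidAlgebraMap _ _ _

noncomputable def mapCoeffs (φ : R₁ →ₗ[K] R₂) :
    MvPolynomial τ R₁ →ₗ[K] MvPolynomial τ R₂ where
  toFun u := AddMonoidAlgebra.map φ.toAddMonoidHom u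
  map_add' u v := AddMonoidAlgebra.map_add _ u v
  map_smul' c u := by
    ext m
    show coeff m (AddMonoidAlgebra.map φ.toAddMonoidHom (c • u) : MvPolynomial τ R₂)
      = coeff m (c • (AddMonoidAlgebra.map φ.toAddMonoidHom u : MvPolynomial τ R₂))
    rw [mapRange_coeff, MvPolynomial.coeff_smul, MvPolynomial.coeff_smul,
      mapRange_coeff, map_smul]

@[simp] lemma coeff_mapCoeffs (φ : R₁ →ₗ[K] R₂) (m : τ →₀ ℕ) (u : MvPolynomial τ R₁) :
    coeff m (mapCoeffs φ u) = φ (coeff m u) :=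
  mapRange_coeff φ u m

lemma mapCoeffs_C (φ : R₁ →ₗ[K] R₂) (r : R₁) :
    mapCoeffs (τ := τ) φ (C r) = C (φ r) := by
  classical
  ext m
  rw [coeff_mapCoeffs, coeff_C, coeff_C]
  split <;> simp

lemma mapCoeffs_one (φ : R₁ →ₗ[K] R₂) (h1 : φ 1 = 1) :
    mapCoeffs (τ := τ) φ 1 = 1 := by
  rw [← C_1, mapCoeffs_C, h1, C_1]

lemma mapCoeffs_X_mul (φ : R₁ →ₗ[K] R₂) (i : τ) (u : MvPolynomial τ R₁) :
    mapCoeffs φ (X i * u) = X i * mapCoeffs φ u := by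
  classical
  ext m
  rw [coeff_mapCoeffs, coeff_X_mul', coeff_X_mul']
  split
  · rw [coeff_mapCoeffs]
  · simp

lemma mapCoeffs_C_mul (φ : R₁ →ₗ[K] R₂) (r : R₁) (s : R₂)
    (hrs : ∀ x, φ (r * x) = s * φ x) (u : MvPolynomial τ R₁) :
    mapCoeffs φ (C r * u) = C s * mapCoeffs φ u := by
  ext m
  rw [coeff_mapCoeffs, coeff_C_mul, coeff_C_mul, hrs, coeff_mapCoeffs]

lemma mapCoeffs_C_mul' (φ ψ : R₁ →ₗ[K] R₂) (r : R₁)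
    (hr : ∀ x, φ (r * x) = ψ x) (u : MvPolynomial τ R₁) :
    mapCoeffs φ (C r * u) = mapCoeffs ψ u := by
  ext m
  rw [coeff_mapCoeffs, coeff_C_mul, hr, coeff_mapCoeffs]

/-- `mapCoeffs` commutes with multiplication by "ground" polynomials. -/
lemma mapCoeffs_map_mul (φ : R₁ →ₗ[K] R₂) (q : MvPolynomial τ K) (u : MvPolynomial τ R₁) :
    mapCoeffs φ (map (algebraMap K R₁) q * u) =
      map (algebraMap K R₂) q * mapCoeffs φ u := by
  induction q using MvPolynomial.induction_on generalizing u with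
  | C a =>
      rw [map_C, map_C, mapCoeffs_C_mul (s := algebraMap K R₂ a)]
      intro x
      rw [← Algebra.smul_def, ← Algebra.smul_def, map_smul]
  | add p q hp hq =>
      rw [_root_.map_add (MvPolynomial.map (algebraMap K R₁)), _root_.map_add (MvPolynomial.map (algebraMap K R₂)), add_mul, add_mul, map_add, hp, hq]
  | mul_X p i hp =>
      have h1 : (map (algebraMap K R₁)) (p * X i) * u
          = X i * ((map (algebraMap K R₁)) p * u) := by
        rw [_root_.map_mul, MvPolynomial.map_X]; ring
      have h2 : (map (algebraMap K R₂)) (p * X i) * mapCoeffs φ u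
          = X i * ((map (algebraMap K R₂)) p * mapCoeffs φ u) := by
        rw [_root_.map_mul, MvPolynomial.map_X]; ring
      rw [h1, h2, mapCoeffs_X_mul, hp]

end MapCoeffs

variable {σ : Type}

noncomputable section

/-- top homogeneous component -/
def fTop (f : MvPolynomial σ K) : MvPolynomial σ K :=
  homogeneousComponent f.totalDegree f

lemma fTop_isHomogeneous (f : MvPolynomial σ K) :
    (fTop f).IsHomogeneous f.totalDegree :=
  homogeneousComponent_isHomogeneous _ f

variable {f : MvPolynomial σ K}

lemma f_ne_zero (hf : f.totalDegree ≠ 0) : f ≠ 0 := by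
  intro h; exact hf (by simp [h])

lemma degree_eq_sum (m : σ →₀ ℕ) : (m.sum fun _ e => e) = m.degree := by
  simp [Finsupp.degree, Finsupp.sum]
  rfl

lemma fTop_ne_zero (hf : f.totalDegree ≠ 0) : fTop f ≠ 0 := by
  obtain ⟨m, hm, hsum⟩ := Finset.exists_mem_eq_sup f.support
    (support_nonempty.mpr (f_ne_zero hf)) (fun s => s.sum fun _ e => e)
  intro h0
  have hc : coeff m (fTop f) = coeff m f := by
    rw [fTop, coeff_homogeneousComponent, if_pos]
    rw [← degree_eq_sum m]
    exact hsum.symm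
  rw [h0, coeff_zero] at hc
  exact (mem_support_iff.mp hm) hc.symm

lemma sub_fTop_totalDegree_lt (hf : f.totalDegree ≠ 0) :
    (f - fTop f).totalDegree < f.totalDegree := by
  rcases eq_or_ne (f - fTop f) 0 with h | h
  · rw [h, totalDegree_zero]; exact Nat.pos_of_ne_zero hf
  · show (f - fTop f).support.sup (fun s => s.sum fun _ e => e) < f.totalDegree
    rw [Finset.sup_lt_iff (by exact Nat.pos_of_ne_zero hf)]
    intro m hm
    by_contra hge
    push_neg at hge
    have hcm : coeff m (f - fTop f) ≠ 0 := mem_support_iff.mp hm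
    rcases eq_or_lt_of_le hge with heq | hlt
    · apply hcm
      rw [coeff_sub, fTop, coeff_homogeneousComponent, if_pos, sub_self]
      rw [← degree_eq_sum m, heq]
    · apply hcm
      have h1 : coeff m f = 0 := coeff_eq_zero_of_totalDegree_lt (by
        rw [show (∑ i ∈ m.support, m i) = (m.sum fun _ e => e) from rfl]; exact hlt)
      have h2 : coeff m (fTop f) = 0 := by
        rw [fTop, coeff_homogeneousComponent, if_neg]
        rw [← degree_eq_sum m]; omega
      rw [coeff_sub, h1, h2, sub_self]

/-- multiplication by the top component, as a map of homogeneous pieces -/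
def Mu (f : MvPolynomial σ K) (i : ℕ) :
    homogeneousSubmodule σ K i →ₗ[K] homogeneousSubmodule σ K (i + f.totalDegree) where
  toFun x := ⟨fTop f * x.1, by
    rw [mem_homogeneousSubmodule]
    have := ((mem_homogeneousSubmodule _ _).mp x.2).mul (fTop_isHomogeneous f)
    rwa [mul_comm] at this⟩
  map_add' x y := by apply Subtype.ext; simp [mul_add]
  map_smul' c x := by apply Subtype.ext; simp [Algebra.mul_smul_comm]

lemma Mu_injective (hf : f.totalDegree ≠ 0) (i : ℕ) :
    Function.Injective (Mu f i) := by
  intro x y h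
  apply Subtype.ext
  have h' : fTop f * x.1 = fTop f * y.1 := congrArg Subtype.val h
  exact mul_left_cancel₀ (fTop_ne_zero hf) h'

/-- a chosen left inverse to `Mu` -/
def Sig (hf : f.totalDegree ≠ 0) (i : ℕ) :
    homogeneousSubmodule σ K (i + f.totalDegree) →ₗ[K] homogeneousSubmodule σ K i :=
  ((Mu f i).exists_leftInverse_of_injective
    (LinearMap.ker_eq_bot.mpr (Mu_injective hf i))).choose

lemma Sig_Mu (hf : f.totalDegree ≠ 0) (i : ℕ) (x : homogeneousSubmodule σ K i) :
    Sig hf i (Mu f i x) = x := by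
  have h := ((Mu f i).exists_leftInverse_of_injective
    (LinearMap.ker_eq_bot.mpr (Mu_injective hf i))).choose_spec
  exact DFunLike.congr_fun h x

/-- corestricted homogeneous component -/
def cor (j : ℕ) : MvPolynomial σ K →ₗ[K] homogeneousSubmodule σ K j :=
  LinearMap.codRestrict _ (homogeneousComponent j) (fun u => homogeneousComponent_mem j u)

def lamZero : MvPolynomial σ K →ₗ[K] Polynomial K where
  toFun u := Polynomial.C (coeff 0 u)
  map_add' u v := by
    show Polynomial.C (coeff 0 (u + v)) = Polynomial.C (coeff 0 u) + Polynomial.C (coeff 0 v)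
    rw [coeff_add, map_add]
  map_smul' c u := by
    show Polynomial.C (coeff 0 (c • u)) = (RingHom.id K) c • Polynomial.C (coeff 0 u)
    rw [coeff_smul, RingHom.id_apply, Polynomial.smul_C, smul_eq_mul, Polynomial.C_mul]

/-- one step of the recursion -/
def mkLam (hf : f.totalDegree ≠ 0)
    (prev : ℕ → (MvPolynomial σ K →ₗ[K] Polynomial K)) (j : ℕ) :
    MvPolynomial σ K →ₗ[K] Polynomial K :=
  if hj : f.totalDegree ≤ j then
    (LinearMap.mulLeft K (Polynomial.X : Polynomial K)).comp
      ((prev (j - f.totalDegree)).comp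
        ((homogeneousSubmodule σ K (j - f.totalDegree)).subtype.comp
          ((Sig hf (j - f.totalDegree)).comp (cor ((j - f.totalDegree) + f.totalDegree)))))
    - (∑ k ∈ Finset.range j, (prev k).comp (homogeneousComponent k)).comp
        ((LinearMap.mulLeft K (f - fTop f)).comp
          ((homogeneousSubmodule σ K (j - f.totalDegree)).subtype.comp
            ((Sig hf (j - f.totalDegree)).comp (cor ((j - f.totalDegree) + f.totalDegree)))))
  else lamZero

def Hseq (hf : f.totalDegree ≠ 0) : ℕ → ℕ → (MvPolynomial σ K →ₗ[K] Polynomial K)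
  | 0 => fun _ => lamZero
  | N + 1 => Function.update (Hseq hf N) (N + 1) (mkLam hf (Hseq hf N) (N + 1))

def Lam (hf : f.totalDegree ≠ 0) (j : ℕ) : MvPolynomial σ K →ₗ[K] Polynomial K :=
  Hseq hf j j

lemma Hseq_stable (hf : f.totalDegree ≠ 0) :
    ∀ N j, j ≤ N → Hseq hf N j = Lam hf j := by
  intro N
  induction N with
  | zero => intro j hj; interval_cases j; rfl
  | succ N ih =>
      intro j hj
      rcases eq_or_ne j (N + 1) with rfl | hne
      · rfl
      · have hjN : j ≤ N := by omega
        show Function.update (Hseq hf N) (N + 1) _ j = _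
        rw [Function.update_of_ne hne, ih j hjN]

lemma mkLam_congr (hf : f.totalDegree ≠ 0) {p q : ℕ → (MvPolynomial σ K →ₗ[K] Polynomial K)}
    (j : ℕ) (h : ∀ k < j, p k = q k) : mkLam hf p j = mkLam hf q j := by
  unfold mkLam
  split
  · next hj =>
      have h1 : p (j - f.totalDegree) = q (j - f.totalDegree) := by
        apply h; have := Nat.pos_of_ne_zero hf; omega
      have h2 : (∑ k ∈ Finset.range j, (p k).comp (homogeneousComponent k))
          = ∑ k ∈ Finset.range j, (q k).comp (homogeneousComponent k) :=
        Finset.sum_congr rfl fun k hk => by rw [h k (Finset.mem_range.mp hk)]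
      rw [h1, h2]
  · rfl

lemma Lam_zero (hf : f.totalDegree ≠ 0) : Lam hf 0 = lamZero := rfl

lemma Lam_rec (hf : f.totalDegree ≠ 0) (j : ℕ) (hj : j ≠ 0) :
    Lam hf j = mkLam hf (Lam hf) j := by
  obtain ⟨N, rfl⟩ : ∃ N, j = N + 1 := ⟨j - 1, by omega⟩
  show Function.update (Hseq hf N) (N + 1) (mkLam hf (Hseq hf N) (N + 1)) (N + 1) = _
  rw [Function.update_self]
  exact mkLam_congr hf _ fun k hk => Hseq_stable hf N k (by omega)

def piN (hf : f.totalDegree ≠ 0) (N : ℕ) : MvPolynomial σ K →ₗ[K] Polynomial K :=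
  ∑ i ∈ Finset.range (N + 1), (Lam hf i).comp (homogeneousComponent i)

lemma piN_stable (hf : f.totalDegree ≠ 0) {u : MvPolynomial σ K} {N : ℕ}
    (h : u.totalDegree ≤ N) : piN hf N u = piN hf u.totalDegree u := by
  unfold piN
  rw [LinearMap.sum_apply, LinearMap.sum_apply]
  symm
  apply Finset.sum_subset
  · exact Finset.range_subset_range.mpr (by omega)
  · intro k _ hk2
    have hk : u.totalDegree < k := by
      simp only [Finset.mem_range, not_lt] at hk2; omega
    rw [LinearMap.comp_apply, homogeneousComponent_eq_zero _ _ hk, map_zero]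

def piF (hf : f.totalDegree ≠ 0) : MvPolynomial σ K →ₗ[K] Polynomial K where
  toFun u := piN hf u.totalDegree u
  map_add' u v := by
    show piN hf (u + v).totalDegree (u + v) = piN hf u.totalDegree u + piN hf v.totalDegree v
    have hM : (u + v).totalDegree ≤ max u.totalDegree v.totalDegree := totalDegree_add u v
    rw [← piN_stable hf hM,
      ← piN_stable hf (le_max_left u.totalDegree v.totalDegree),
      ← piN_stable hf (le_max_right u.totalDegree v.totalDegree), map_add]
  map_smul' c u := by
    show piN hf (c • u).totalDegree (c • u) = (RingHom.id K) c • piN hf u.totalDegree u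
    rw [RingHom.id_apply, ← piN_stable hf (totalDegree_smul_le c u), map_smul]

lemma piF_apply_homog (hf : f.totalDegree ≠ 0) {v : MvPolynomial σ K} {j : ℕ}
    (hv : v.IsHomogeneous j) : piF hf v = Lam hf j v := by
  show piN hf v.totalDegree v = _
  rw [← piN_stable hf (le_max_right j v.totalDegree)]
  unfold piN
  rw [LinearMap.sum_apply]
  rw [Finset.sum_eq_single j]
  · rw [LinearMap.comp_apply,
      homogeneousComponent_of_mem ((mem_homogeneousSubmodule _ _).mpr hv), if_pos rfl]
  · intro k _ hk
    rw [LinearMap.comp_apply,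
      homogeneousComponent_of_mem ((mem_homogeneousSubmodule _ _).mpr hv), if_neg hk,
      map_zero]
  · intro hj
    exact absurd (Finset.mem_range.mpr (by omega)) hj

lemma sum_range_eq_piF (hf : f.totalDegree ≠ 0) {w : MvPolynomial σ K} {M : ℕ}
    (h : w.totalDegree < M) :
    ∑ k ∈ Finset.range M, Lam hf k (homogeneousComponent k w) = piF hf w := by
  obtain ⟨N, rfl⟩ : ∃ N, M = N + 1 := ⟨M - 1, by omega⟩
  have h1 : ∑ k ∈ Finset.range (N + 1), Lam hf k (homogeneousComponent k w)
      = piN hf N w := by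
    unfold piN; rw [LinearMap.sum_apply]; rfl
  rw [h1, piN_stable hf (by omega)]
  rfl

lemma key_homog (hf : f.totalDegree ≠ 0) {u : MvPolynomial σ K} {i : ℕ}
    (hu : u.IsHomogeneous i) :
    piF hf (f * u) = Polynomial.X * piF hf u := by
  set d := f.totalDegree with hd
  -- the top part
  have humem : u ∈ homogeneousSubmodule σ K ((i + d) - d) := by
    rw [mem_homogeneousSubmodule]
    have : (i + d) - d = i := by omega
    rw [this]; exact hu
  have htop : (fTop f * u).IsHomogeneous (((i + d) - d) + d) := by
    have := ((mem_homogeneousSubmodule _ _).mp humem).mul (fTop_isHomogeneous f)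
    rwa [mul_comm] at this
  have hble : d ≤ i + d := Nat.le_add_left d i
  have h1 : piF hf (f * u) = piF hf (fTop f * u) + piF hf ((f - fTop f) * u) := by
    rw [← map_add]; congr 1; ring
  have hcor : cor (((i + d) - d) + d) (fTop f * u)
      = Mu f ((i + d) - d) ⟨u, humem⟩ := by
    apply Subtype.ext
    show homogeneousComponent (((i + d) - d) + d) (fTop f * u) = fTop f * u
    rw [homogeneousComponent_of_mem ((mem_homogeneousSubmodule _ _).mpr htop), if_pos rfl]
  have hmk : mkLam hf (Lam hf) (i + d) (fTop f * u)
      = Polynomial.X * Lam hf ((i + d) - d) u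
        - ∑ k ∈ Finset.range (i + d), Lam hf k (homogeneousComponent k ((f - fTop f) * u)) := by
    unfold mkLam
    rw [dif_pos hble, LinearMap.sub_apply]
    simp only [LinearMap.comp_apply, LinearMap.mulLeft_apply, LinearMap.sum_apply]
    rw [hcor, Sig_Mu]
    simp only [Submodule.coe_subtype]
    rfl
  have hsum : ∑ k ∈ Finset.range (i + d),
        Lam hf k (homogeneousComponent k ((f - fTop f) * u))
      = piF hf ((f - fTop f) * u) := by
    apply sum_range_eq_piF hf
    have hmul := totalDegree_mul (f - fTop f) u
    have hlt := sub_fTop_totalDegree_lt hf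
    have hu' := hu.totalDegree_le
    omega
  have htop' : (fTop f * u).IsHomogeneous (i + d) := by
    have h := htop; rwa [show ((i + d) - d) + d = i + d by omega] at h
  have h2 : piF hf (fTop f * u)
      = Polynomial.X * Lam hf ((i + d) - d) u - piF hf ((f - fTop f) * u) := by
    rw [piF_apply_homog hf htop', Lam_rec hf (i + d) (by omega), hmk, hsum]
  have h3 : Lam hf ((i + d) - d) u = Lam hf i u := by
    rw [show (i + d) - d = i by omega]
  rw [h1, h2, h3, piF_apply_homog hf hu]
  ring

theorem exists_pi (f : MvPolynomial σ K) (hf : f.totalDegree ≠ 0) :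
    ∃ π : MvPolynomial σ K →ₗ[K] Polynomial K,
      π 1 = 1 ∧ ∀ u, π (f * u) = Polynomial.X * π u := by
  refine ⟨piF hf, ?_, ?_⟩
  · rw [piF_apply_homog hf (isHomogeneous_one σ K)]
    show lamZero (1 : MvPolynomial σ K) = 1
    show Polynomial.C (coeff 0 (1 : MvPolynomial σ K)) = 1
    simp
  · intro u
    have expand := sum_homogeneousComponent u
    conv_lhs => rw [← expand]
    conv_rhs => rw [← expand]
    rw [Finset.mul_sum, map_sum, map_sum, Finset.mul_sum]
    exact Finset.sum_congr rfl fun i _ =>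
      key_homog hf (homogeneousComponent_isHomogeneous i u)

end

section Keys

variable {σ τ : Type}

lemma key1 (f F : MvPolynomial σ K) (g G : MvPolynomial τ K)
    (hf : f.totalDegree ≠ 0)
    (hdvd : (rename Sum.inr f - rename Sum.inl g) ∣
      (rename Sum.inr F - rename Sum.inl G : MvPolynomial (τ ⊕ σ) K)) :
    ∃ h : Polynomial K, G = Polynomial.aeval g h := by
  obtain ⟨π, hπ1, hπX⟩ := exists_pi f hf
  obtain ⟨Q, hQ⟩ := hdvd
  set e := sumAlgEquiv K τ σ with he
  have hinr : ∀ p : MvPolynomial σ K, e (rename Sum.inr p) = C p := by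
    intro p
    have h := AlgHom.congr_fun (sumAlgEquiv_comp_rename_inr K τ σ) p
    simpa [IsScalarTower.toAlgHom_apply, MvPolynomial.algebraMap_eq] using h
  have hinl : ∀ q : MvPolynomial τ K,
      e (rename Sum.inl q) = map (algebraMap K (MvPolynomial σ K)) q := by
    intro q
    have h := AlgHom.congr_fun (sumAlgEquiv_comp_rename_inl K τ σ) q
    simpa [mapAlgHom_apply, Algebra.ofId_apply] using h
  have EL : (C F - map (algebraMap K (MvPolynomial σ K)) G
      : MvPolynomial τ (MvPolynomial σ K))
      = (C f - map (algebraMap K (MvPolynomial σ K)) g) * e Q := by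
    have h := congrArg e hQ
    rw [map_sub, map_mul, map_sub, hinr, hinr, hinl, hinl] at h
    exact h
  -- apply mapCoeffs π
  have EPsi : (C (π F) - map (algebraMap K (Polynomial K)) G
      : MvPolynomial τ (Polynomial K))
      = C Polynomial.X * mapCoeffs π (e Q)
        - map (algebraMap K (Polynomial K)) g * mapCoeffs π (e Q) := by
    have h := congrArg (mapCoeffs π) EL
    rw [map_sub, mapCoeffs_C, sub_mul, map_sub] at h
    rw [mapCoeffs_C_mul π f Polynomial.X (fun x => hπX x)] at h
    rw [show (map (algebraMap K (MvPolynomial σ K)) G : MvPolynomial τ (MvPolynomial σ K))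
        = map (algebraMap K (MvPolynomial σ K)) G * 1 from (mul_one _).symm] at h
    rw [mapCoeffs_map_mul, mapCoeffs_one π hπ1, mul_one] at h
    rw [mapCoeffs_map_mul] at h
    exact h
  -- evaluate t ↦ g
  set ev : MvPolynomial τ (Polynomial K) →+* MvPolynomial τ K :=
    eval₂Hom ((Polynomial.aeval g).toRingHom :
      Polynomial K →+* MvPolynomial τ K) X with hev
  have hevmap : ∀ q : MvPolynomial τ K,
      ev (map (algebraMap K (Polynomial K)) q) = q := by
    intro q
    rw [hev]
    show eval₂ _ X (map (algebraMap K (Polynomial K)) q) = q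
    rw [eval₂_map]
    have hcomp : (((Polynomial.aeval g).toRingHom :
        Polynomial K →+* MvPolynomial τ K).comp (algebraMap K (Polynomial K)))
        = (C : K →+* MvPolynomial τ K) := by
      ext k
      simp
    rw [hcomp, eval₂_eta]
  have hfin := congrArg ev EPsi
  rw [map_sub, map_sub, map_mul, map_mul, hevmap, hevmap] at hfin
  have h1 : ev (C (π F)) = Polynomial.aeval g (π F) := by
    rw [hev]; exact eval₂Hom_C _ _ _
  have h2 : ev (C (Polynomial.X : Polynomial K)) = g := by
    rw [hev]
    have := eval₂Hom_C ((Polynomial.aeval g).toRingHom :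
      Polynomial K →+* MvPolynomial τ K) (X : τ → MvPolynomial τ K)
      (Polynomial.X : Polynomial K)
    simpa using this
  rw [h1, h2] at hfin
  have hzero : Polynomial.aeval g (π F) - G = 0 := by rw [hfin]; ring
  exact ⟨π F, (sub_eq_zero.mp hzero).symm⟩

lemma key2 (f : MvPolynomial σ K) (g w : MvPolynomial τ K)
    (hf : f.totalDegree ≠ 0)
    (hdvd : (rename Sum.inr f - rename Sum.inl g) ∣
      (rename Sum.inl w : MvPolynomial (τ ⊕ σ) K)) :
    w = 0 := by
  obtain ⟨π, hπ1, hπX⟩ := exists_pi f hf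
  obtain ⟨Q, hQ⟩ := hdvd
  set e := sumAlgEquiv K τ σ with he
  have hinr : ∀ p : MvPolynomial σ K, e (rename Sum.inr p) = C p := by
    intro p
    have h := AlgHom.congr_fun (sumAlgEquiv_comp_rename_inr K τ σ) p
    simpa [IsScalarTower.toAlgHom_apply, MvPolynomial.algebraMap_eq] using h
  have hinl : ∀ q : MvPolynomial τ K,
      e (rename Sum.inl q) = map (algebraMap K (MvPolynomial σ K)) q := by
    intro q
    have h := AlgHom.congr_fun (sumAlgEquiv_comp_rename_inl K τ σ) q
    simpa [mapAlgHom_apply, Algebra.ofId_apply] using h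
  have EL : (map (algebraMap K (MvPolynomial σ K)) w : MvPolynomial τ (MvPolynomial σ K))
      = (C f - map (algebraMap K (MvPolynomial σ K)) g) * e Q := by
    have h := congrArg e hQ
    rw [map_mul, map_sub, hinr, hinl, hinl] at h
    exact h
  set R : MvPolynomial τ (Polynomial K) := mapCoeffs π (e Q) with hR
  have EPsi : (map (algebraMap K (Polynomial K)) w : MvPolynomial τ (Polynomial K))
      = C Polynomial.X * R - map (algebraMap K (Polynomial K)) g * R := by
    have h := congrArg (mapCoeffs π) EL
    rw [sub_mul, map_sub] at h
    rw [mapCoeffs_C_mul π f Polynomial.X (fun x => hπX x)] at h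
    rw [show (map (algebraMap K (MvPolynomial σ K)) w : MvPolynomial τ (MvPolynomial σ K))
        = map (algebraMap K (MvPolynomial σ K)) w * 1 from (mul_one _).symm] at h
    rw [mapCoeffs_map_mul, mapCoeffs_one π hπ1, mul_one] at h
    rw [mapCoeffs_map_mul] at h
    exact h
  set lam : ℕ → (MvPolynomial τ (Polynomial K) →ₗ[K] MvPolynomial τ K) :=
    fun k => mapCoeffs (Polynomial.lcoeff K k) with hlam
  have hmapid : ∀ q : MvPolynomial τ K, map (algebraMap K K) q = q := by
    intro q
    have : (algebraMap K K) = RingHom.id K := Algebra.algebraMap_self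
    rw [this, map_id]
  have lam_one : ∀ k, lam k (1 : MvPolynomial τ (Polynomial K))
      = C (if k = 0 then 1 else 0) := by
    intro k
    rw [hlam]
    show mapCoeffs (Polynomial.lcoeff K k) (1 : MvPolynomial τ (Polynomial K)) = _
    rw [← C_1, mapCoeffs_C]
    congr 1
    rw [Polynomial.lcoeff_apply, Polynomial.coeff_one]
  have lam_map : ∀ k (q : MvPolynomial τ K),
      lam k (map (algebraMap K (Polynomial K)) q) = if k = 0 then q else 0 := by
    intro k q
    have h : lam k (map (algebraMap K (Polynomial K)) q * 1)
        = map (algebraMap K K) q * lam k 1 := mapCoeffs_map_mul _ q 1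
    rw [mul_one, hmapid, lam_one] at h
    rw [h]
    split
    · rw [C_1, mul_one]
    · rw [map_zero, mul_zero]
  have lam_gmul : ∀ k (u : MvPolynomial τ (Polynomial K)),
      lam k (map (algebraMap K (Polynomial K)) g * u) = g * lam k u := by
    intro k u
    have h := mapCoeffs_map_mul (Polynomial.lcoeff K k) g u
    rwa [hmapid] at h
  have lam_X : ∀ k (u : MvPolynomial τ (Polynomial K)),
      lam (k + 1) (C Polynomial.X * u) = lam k u := by
    intro k u
    apply mapCoeffs_C_mul'
    intro x
    rw [Polynomial.lcoeff_apply, Polynomial.lcoeff_apply, Polynomial.coeff_X_mul]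
  -- the relation, for k = j + 1
  have rel : ∀ j : ℕ, lam j R = g * lam (j + 1) R := by
    intro j
    have h := congrArg (lam (j + 1)) EPsi
    rw [map_sub, lam_X, lam_gmul, lam_map] at h
    rw [if_neg (Nat.succ_ne_zero j)] at h
    exact sub_eq_zero.mp h.symm
  classical
  set N : ℕ := R.support.sup (fun mm => (coeff mm R).natDegree) with hN
  have hbig : ∀ k, N < k → lam k R = 0 := by
    intro k hk
    ext mm
    rw [hlam]
    show (Polynomial.lcoeff K k) (coeff mm R) = coeff mm 0
    rw [coeff_zero, Polynomial.lcoeff_apply]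
    rcases eq_or_ne (coeff mm R) 0 with h0 | h0
    · rw [h0, Polynomial.coeff_zero]
    · apply Polynomial.coeff_eq_zero_of_natDegree_lt
      have hmem : mm ∈ R.support := mem_support_iff.mpr h0
      have hle : (coeff mm R).natDegree ≤ N := by
        simpa [hN] using Finset.le_sup (f := fun mm => (coeff mm R).natDegree) hmem
      omega
  have hdesc : ∀ i, i ≤ N + 1 → lam (N + 1 - i) R = 0 := by
    intro i
    induction i with
    | zero => intro _; exact hbig (N + 1) (by omega)
    | succ i ih =>
        intro hi
        have hih := ih (by omega)
        have hstep := rel (N + 1 - (i + 1))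
        have harith : N + 1 - (i + 1) + 1 = N + 1 - i := by omega
        rw [harith, hih, mul_zero] at hstep
        exact hstep
  have hall : ∀ k, lam k R = 0 := by
    intro k
    rcases le_or_gt k N with hk | hk
    · have := hdesc (N + 1 - k) (by omega)
      rwa [show N + 1 - (N + 1 - k) = k by omega] at this
    · exact hbig k hk
  have hR0 : R = 0 := by
    ext mm k
    have h := hall k
    rw [hlam] at h
    have h2 := congrArg (coeff mm) h
    rw [coeff_mapCoeffs, coeff_zero, Polynomial.lcoeff_apply] at h2
    simpa using h2
  have hw : map (algebraMap K (Polynomial K)) w = 0 := by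
    rw [EPsi, hR0, mul_zero, mul_zero, sub_zero]
  have hinj : Function.Injective (map (algebraMap K (Polynomial K)) :
      MvPolynomial τ K → MvPolynomial τ (Polynomial K)) :=
    map_injective _ (fun a b hab => by
      have := congrArg (Polynomial.coeff · 0) hab
      simpa using this)
  have := hinj (a₁ := w) (a₂ := 0) (by rw [hw, map_zero])
  exact this

end Keys

lemma aeval_sub_dvd {R : Type} [CommRing R] [Algebra K R] (a b : R) (h : Polynomial K) :
    a - b ∣ Polynomial.aeval a h - Polynomial.aeval b h := by
  rw [Polynomial.aeval_def, Polynomial.aeval_def, ← Polynomial.eval_map, ← Polynomial.eval_map]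
  exact Polynomial.sub_dvd_eval_sub a b _

end FriedMacRaeProof

open FriedMacRaeProof in
/-- Theorem of Fried–MacRae type ("Theorem `thm:fried`"): for non-constant `f, F ∈ K[X]` and
`g, G ∈ K[Y]`, there exists `h ∈ K[t]` with `F = h(f)` and `G = h(g)` if and only if
`f - g` divides `F - G` in `K[X,Y]`. -/
theorem fried_macrae (K : Type) [Field K] [CharZero K] (n m : ℕ)
    (f F : MvPolynomial (Fin n) K) (g G : MvPolynomial (Fin m) K)
    (hf : f.totalDegree ≠ 0) (hF : F.totalDegree ≠ 0)
    (hg : g.totalDegree ≠ 0) (hG : G.totalDegree ≠ 0) :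
    (∃ h : Polynomial K, F = Polynomial.aeval f h ∧ G = Polynomial.aeval g h) ↔
      (rename Sum.inl f - rename Sum.inr g) ∣
        (rename Sum.inl F - rename Sum.inr G :
          MvPolynomial (Fin n ⊕ Fin m) K) := by
  constructor
  · rintro ⟨h, hFh, hGh⟩
    rw [hFh, hGh, ← Polynomial.aeval_algHom_apply (rename Sum.inl) f h,
      ← Polynomial.aeval_algHom_apply (rename Sum.inr) g h]
    exact aeval_sub_dvd _ _ h
  · intro hdvd
    have hd1 : (rename Sum.inr g - rename Sum.inl f : MvPolynomial (Fin n ⊕ Fin m) K) ∣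
        (rename Sum.inr G - rename Sum.inl F) := by
      rw [← neg_sub (rename Sum.inl f) (rename Sum.inr g),
        ← neg_sub ((rename Sum.inl) F) ((rename Sum.inr) G)]
      exact neg_dvd.mpr (dvd_neg.mpr hdvd)
    obtain ⟨h, hFh⟩ := key1 g G f F hg hd1
    have heasy : (rename Sum.inl f - rename Sum.inr g : MvPolynomial (Fin n ⊕ Fin m) K) ∣
        (rename Sum.inl (Polynomial.aeval f h) - rename Sum.inr (Polynomial.aeval g h)) := by
      rw [← Polynomial.aeval_algHom_apply (rename Sum.inl) f h,
        ← Polynomial.aeval_algHom_apply (rename Sum.inr) g h]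
      exact aeval_sub_dvd _ _ h
    have hd2 : (rename Sum.inl f - rename Sum.inr g : MvPolynomial (Fin n ⊕ Fin m) K) ∣
        (rename Sum.inr (Polynomial.aeval g h - G)) := by
      have hexp : (rename Sum.inr (Polynomial.aeval g h - G) : MvPolynomial (Fin n ⊕ Fin m) K)
          = (rename Sum.inl F - rename Sum.inr G)
            - (rename Sum.inl (Polynomial.aeval f h) - rename Sum.inr (Polynomial.aeval g h)) := by
        rw [← hFh, map_sub]
        ring
      rw [hexp]
      exact dvd_sub hdvd heasy
    have hswapl : ∀ p : MvPolynomial (Fin n) K,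
        rename Sum.swap (rename Sum.inl p : MvPolynomial (Fin n ⊕ Fin m) K)
          = rename Sum.inr p := by
      intro p
      rw [rename_rename]
      have : (Sum.swap ∘ (Sum.inl : Fin n → Fin n ⊕ Fin m))
          = (Sum.inr : Fin n → Fin m ⊕ Fin n) := by funext x; rfl
      rw [this]
    have hswapr : ∀ q : MvPolynomial (Fin m) K,
        rename Sum.swap (rename Sum.inr q : MvPolynomial (Fin n ⊕ Fin m) K)
          = rename Sum.inl q := by
      intro q
      rw [rename_rename]
      have : (Sum.swap ∘ (Sum.inr : Fin m → Fin n ⊕ Fin m))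
          = (Sum.inl : Fin m → Fin m ⊕ Fin n) := by funext x; rfl
      rw [this]
    have hd3 : (rename Sum.inr f - rename Sum.inl g : MvPolynomial (Fin m ⊕ Fin n) K) ∣
        (rename Sum.inl (Polynomial.aeval g h - G)) := by
      have hm := map_dvd
        (rename Sum.swap : MvPolynomial (Fin n ⊕ Fin m) K →ₐ[K] MvPolynomial (Fin m ⊕ Fin n) K)
        hd2
      rw [map_sub, hswapl, hswapr, hswapr] at hm
      exact hm
    have hzero := key2 f g (Polynomial.aeval g h - G) hf hd3
    exact ⟨h, hFh, (sub_eq_zero.mp hzero).symm⟩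
end

section
/- Let I₀ be an ideal of K[X,Y] of dimension zero, i.e., such that K[X,Y]/I₀ is a finite-dimensional K-vector space, and let I₁ = ⟨p⟩ be a principal ideal of K[X,Y] whose generator p satisfies p ∉ K[X] ∪ K[Y]. Then A(I₀ ∩ I₁) is a finitely generated K-algebra. -/
open MvPolynomial


/-- Base-M digit representations are unique. -/
theorem digits_inj {M : ℕ} (hM : 0 < M) : ∀ {b : ℕ} (f g : Fin b → ℕ),
    (∀ j, f j < M) → (∀ j, g j < M) →
    (∑ j, f j * M ^ (j : ℕ)) = (∑ j, g j * M ^ (j : ℕ)) → f = g := by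
  intro b
  induction b with
  | zero => intro f g _ _ _; funext j; exact absurd j.2 (by omega)
  | succ b ih =>
    intro f g hf hg hsum
    rw [Fin.sum_univ_succ, Fin.sum_univ_succ] at hsum
    simp only [Fin.val_zero, pow_zero, mul_one, Fin.val_succ] at hsum
    have hre : ∀ (u : Fin b → ℕ), (∑ j : Fin b, u j * M ^ ((j : ℕ) + 1))
        = M * ∑ j : Fin b, u j * M ^ (j : ℕ) := by
      intro u
      rw [Finset.mul_sum]
      congr 1; funext j; ring
    rw [hre (fun j => f j.succ), hre (fun j => g j.succ)] at hsum
    have h0 : f 0 = g 0 := by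
      have h1 := congrArg (· % M) hsum
      simpa [Nat.add_mul_mod_self_left, Nat.mod_eq_of_lt (hf 0), Nat.mod_eq_of_lt (hg 0)] using h1
    have h2 : (∑ j : Fin b, f j.succ * M ^ (j : ℕ)) = ∑ j : Fin b, g j.succ * M ^ (j : ℕ) := by
      rw [h0] at hsum
      have := Nat.add_left_cancel hsum
      exact Nat.eq_of_mul_eq_mul_left hM this
    have htail := ih (fun j => f j.succ) (fun j => g j.succ)
      (fun j => hf j.succ) (fun j => hg j.succ) h2
    funext j
    rcases Fin.eq_zero_or_eq_succ j with rfl | ⟨k, rfl⟩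
    · exact h0
    · exact congrFun htail k



theorem key_subst (K : Type) [Field K] (a b : ℕ) (p : MvPolynomial (Fin a ⊕ Fin b) K)
    (hp : p ∉ supported K (Set.range (Sum.inl : Fin a → Fin a ⊕ Fin b))) :
    ∃ (ψ : MvPolynomial (Fin b) K →ₐ[K] Polynomial K)
      (Θ : MvPolynomial (Fin a ⊕ Fin b) K →ₐ[K] Polynomial (MvPolynomial (Fin a) K)),
      (∀ u : MvPolynomial (Fin a) K, Θ (rename Sum.inl u) = Polynomial.C u) ∧
      (∀ v : MvPolynomial (Fin b) K,
        Θ (rename Sum.inr v) = (ψ v).map (algebraMap K (MvPolynomial (Fin a) K))) ∧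
      1 ≤ (Θ p).natDegree := by
  classical
  set E : MvPolynomial (Fin a ⊕ Fin b) K ≃ₐ[K] MvPolynomial (Fin b) (MvPolynomial (Fin a) K) :=
    (renameEquiv K (Equiv.sumComm (Fin a) (Fin b))).trans (sumAlgEquiv K (Fin b) (Fin a)) with hE
  set P : MvPolynomial (Fin b) (MvPolynomial (Fin a) K) := E p with hP
  set M : ℕ := P.totalDegree + 1 with hM
  have hMpos : 0 < M := Nat.succ_pos _
  set Φ : MvPolynomial (Fin b) (MvPolynomial (Fin a) K) →ₐ[(MvPolynomial (Fin a) K)] Polynomial (MvPolynomial (Fin a) K) :=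
    aeval (fun j : Fin b => (Polynomial.X : Polynomial (MvPolynomial (Fin a) K)) ^ (M ^ (j : ℕ))) with hΦ
  set ψ : MvPolynomial (Fin b) K →ₐ[K] Polynomial K :=
    aeval (fun j : Fin b => (Polynomial.X : Polynomial K) ^ (M ^ (j : ℕ))) with hψ
  set Θ : MvPolynomial (Fin a ⊕ Fin b) K →ₐ[K] Polynomial (MvPolynomial (Fin a) K) :=
    (Φ.restrictScalars K).comp E.toAlgHom with hΘ
  -- (1) Θ on inl-renamed polynomials
  have h1 : ∀ u : MvPolynomial (Fin a) K, Θ (rename Sum.inl u) = Polynomial.C u := by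
    have hcomp : Θ.comp (rename (Sum.inl : Fin a → Fin a ⊕ Fin b))
        = IsScalarTower.toAlgHom K (MvPolynomial (Fin a) K) (Polynomial (MvPolynomial (Fin a) K)) := by
      apply MvPolynomial.algHom_ext
      intro i
      simp [hΘ, hE, hΦ, sumAlgEquiv_X_inr, sumToIter_Xr, Polynomial.algebraMap_eq]
    intro u
    simpa using DFunLike.congr_fun hcomp u
  -- (2) Θ on inr-renamed polynomials
  have h2 : ∀ v : MvPolynomial (Fin b) K,
      Θ (rename Sum.inr v) = (ψ v).map (algebraMap K (MvPolynomial (Fin a) K)) := by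
    have hcomp : Θ.comp (rename (Sum.inr : Fin b → Fin a ⊕ Fin b))
        = (Polynomial.mapAlgHom (Algebra.ofId K (MvPolynomial (Fin a) K))).comp ψ := by
      apply MvPolynomial.algHom_ext
      intro j
      simp [hΘ, hE, hΦ, hψ, sumAlgEquiv_X_inl, sumToIter_Xl, Polynomial.mapAlgHom, Algebra.ofId]
    intro v
    simpa [Polynomial.mapAlgHom, Algebra.ofId] using DFunLike.congr_fun hcomp v
  refine ⟨ψ, Θ, h1, h2, ?_⟩
  -- computation of E on inl-renamed polynomials
  have hEinl : ∀ r : MvPolynomial (Fin a) K, E (rename Sum.inl r) = C r := by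
    intro r
    rw [hE]
    simp only [AlgEquiv.trans_apply, renameEquiv_apply, rename_rename]
    have hc : (⇑(Equiv.sumComm (Fin a) (Fin b))) ∘ Sum.inl = (Sum.inr : Fin a → Fin b ⊕ Fin a) :=
      rfl
    rw [hc]
    simpa [MvPolynomial.algebraMap_eq] using
      DFunLike.congr_fun (sumAlgEquiv_comp_rename_inr K (Fin b) (Fin a)) r
  -- find a support element with nonzero inr-part
  have hnc : ∃ β ∈ P.support, β ≠ 0 := by
    by_contra hall
    push_neg at hall
    have hPC : P = C (coeff 0 P) := by
      apply MvPolynomial.ext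
      intro m
      rw [coeff_C]
      by_cases hm : (0 : Fin b →₀ ℕ) = m
      · rw [if_pos hm, hm]
      · rw [if_neg hm]
        by_contra hmem
        exact hm ((hall m (mem_support_iff.mpr hmem)).symm)
    have hpE : p = rename Sum.inl (coeff 0 P) := by
      apply E.injective
      rw [hEinl, ← hP]
      exact hPC
    apply hp
    rw [hpE, mem_supported]
    intro v hv
    obtain ⟨i, -, rfl⟩ := Finset.mem_image.mp (vars_rename Sum.inl (coeff 0 P) hv)
    exact Set.mem_range_self i
  obtain ⟨β₀, hβ₀supp, hβ₀ne⟩ := hnc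
  -- bounds on exponents
  have hbound : ∀ β ∈ P.support, ∀ j, β j < M := by
    intro β hβ j
    have h1' : β j ≤ β.sum fun _ e => e := by
      by_cases hj : j ∈ β.support
      · exact Finset.single_le_sum (fun _ _ => Nat.zero_le _) hj
      · simp [Finsupp.notMem_support_iff.mp hj]
    have h2' : (β.sum fun _ e => e) ≤ P.totalDegree := le_totalDegree hβ
    omega
  set Nw : (Fin b →₀ ℕ) → ℕ := fun β => ∑ j : Fin b, β j * M ^ (j : ℕ) with hNw
  -- expansion of Φ P
  have hexp : Φ P = ∑ β ∈ P.support,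
      Polynomial.C (coeff β P) * Polynomial.X ^ (Nw β) := by
    rw [hΦ, aeval_def, eval₂_eq']
    refine Finset.sum_congr rfl fun β _ => ?_
    rw [← Polynomial.algebraMap_eq]
    congr 1
    rw [← Finset.prod_pow_eq_pow_sum]
    congr 1
    funext j
    rw [← pow_mul, mul_comm]
  have hcoeff : (Φ P).coeff (Nw β₀) = coeff β₀ P := by
    rw [hexp, Polynomial.finset_sum_coeff]
    rw [Finset.sum_eq_single_of_mem β₀ hβ₀supp]
    · simp [Polynomial.coeff_X_pow]
    · intro β hβ hne
      have hNne : Nw β ≠ Nw β₀ := by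
        intro heq
        apply hne
        have := digits_inj hMpos (fun j => β j) (fun j => β₀ j)
          (fun j => hbound β hβ j) (fun j => hbound β₀ hβ₀supp j) (by simpa [hNw] using heq)
        ext j
        exact congrFun this j
      simp only [Polynomial.coeff_C_mul, Polynomial.coeff_X_pow]
      rw [if_neg (fun h => hNne h.symm), mul_zero]
  have hne0 : (Φ P).coeff (Nw β₀) ≠ 0 := by
    rw [hcoeff]
    exact mem_support_iff.mp hβ₀supp
  have hN1 : 1 ≤ Nw β₀ := by
    obtain ⟨j, hj⟩ : ∃ j, β₀ j ≠ 0 := by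
      by_contra hz
      push_neg at hz
      exact hβ₀ne (Finsupp.ext fun j => hz j)
    have h3 : 0 < β₀ j * M ^ (j : ℕ) :=
      Nat.mul_pos (Nat.pos_of_ne_zero hj) (pow_pos hMpos _)
    have h4 : β₀ j * M ^ (j : ℕ) ≤ Nw β₀ := by
      show β₀ j * M ^ (j : ℕ) ≤ ∑ j : Fin b, β₀ j * M ^ (j : ℕ)
      exact Finset.single_le_sum (f := fun j : Fin b => β₀ j * M ^ (j : ℕ))
        (fun _ _ => Nat.zero_le _) (Finset.mem_univ j)
    omega
  have hΘp : Θ p = Φ P := rfl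
  rw [hΘp]
  exact le_trans hN1 (Polynomial.le_natDegree_of_ne_zero hne0)


open Polynomial in
/-- Every subalgebra of `K[X]` (one variable, `K` a field) is finitely generated. -/
theorem subalgebra_polynomial_fg (K : Type) [Field K] (B : Subalgebra K (Polynomial K)) :
    B.FG := by
  classical
  by_cases hc : ∃ f ∈ B, 0 < f.natDegree
  · obtain ⟨f₀, hf₀B, hd₀⟩ := hc
    -- K[X] is a finite module over B
    have key : ∀ N : ℕ, ∀ h : Polynomial K, h.natDegree ≤ N →
        h ∈ Submodule.span B (((Finset.range f₀.natDegree).image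
          (fun r => (X : Polynomial K) ^ r) : Finset (Polynomial K)) : Set (Polynomial K)) := by
      intro N
      induction N using Nat.strong_induction_on with
      | _ N ih =>
        intro h hhN
        by_cases h0 : h = 0
        · simp [h0]
        by_cases hsmall : h.natDegree < f₀.natDegree
        · -- low degree: h = ∑ C (coeff r) * X^r with X^r generators
          rw [h.as_sum_range_C_mul_X_pow]
          refine Submodule.sum_mem _ ?_
          intro r hr
          have hrg : r < f₀.natDegree := lt_of_lt_of_le (Finset.mem_range.mp hr)
            (Nat.succ_le_of_lt hsmall)
          have hXr : (X : Polynomial K) ^ r ∈ (((Finset.range f₀.natDegree).image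
              (fun r => (X : Polynomial K) ^ r) : Finset (Polynomial K)) : Set (Polynomial K)) := by
            simp only [Finset.coe_image, Set.mem_image, Finset.mem_coe, Finset.mem_range]
            exact ⟨r, hrg, rfl⟩
          have : (Polynomial.C (h.coeff r) : Polynomial K) * Polynomial.X ^ r
              = (⟨Polynomial.C (h.coeff r), B.algebraMap_mem (h.coeff r)⟩ : B)
                • (Polynomial.X : Polynomial K) ^ r := by
            rw [Algebra.smul_def]; rfl
          rw [this]
          exact Submodule.smul_mem _ _ (Submodule.subset_span hXr)
        · -- high degree: subtract a multiple of f₀ * X^(deg - deg₀)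
          push_neg at hsmall
          set N₀ := h.natDegree with hN₀
          set u : Polynomial K := Polynomial.C (h.leadingCoeff / f₀.leadingCoeff) * f₀ with hu
          have hf₀0 : f₀ ≠ 0 := fun hh => by simp [hh] at hd₀
          have hlcf₀ : f₀.leadingCoeff ≠ 0 := leadingCoeff_ne_zero.mpr hf₀0
          have hlch : h.leadingCoeff ≠ 0 := leadingCoeff_ne_zero.mpr h0
          have hcne : h.leadingCoeff / f₀.leadingCoeff ≠ 0 := div_ne_zero hlch hlcf₀
          have hu0 : u ≠ 0 := mul_ne_zero (fun hh => hcne (by simpa using hh)) hf₀0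
          set v : Polynomial K := u * Polynomial.X ^ (N₀ - f₀.natDegree) with hv
          have hv0 : v ≠ 0 := mul_ne_zero hu0 (pow_ne_zero _ X_ne_zero)
          have hudeg : u.natDegree = f₀.natDegree := by
            rw [hu, natDegree_C_mul hcne]
          have hvdeg : v.natDegree = N₀ := by
            rw [hv, natDegree_mul hu0 (pow_ne_zero _ X_ne_zero), natDegree_X_pow, hudeg]
            omega
          have hvlc : v.leadingCoeff = h.leadingCoeff := by
            rw [hv, leadingCoeff_mul, leadingCoeff_X_pow, mul_one, hu, leadingCoeff_mul,
              leadingCoeff_C, div_mul_cancel₀ _ hlcf₀]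
          have hsub : (h - v).natDegree < N₀ ∨ h - v = 0 := by
            by_cases hz : h - v = 0
            · exact Or.inr hz
            · left
              have := degree_sub_lt (by rw [degree_eq_natDegree h0, degree_eq_natDegree hv0, hvdeg])
                h0 hvlc.symm
              have h2 : (h - v).degree < (N₀ : WithBot ℕ) := by
                rwa [degree_eq_natDegree h0] at this
              exact_mod_cast (natDegree_lt_iff_degree_lt hz).mpr h2
          have hNpos : 0 < N₀ := lt_of_lt_of_le hd₀ hsmall
          have hhv : h - v ∈ Submodule.span B (((Finset.range f₀.natDegree).image
              (fun r => (X : Polynomial K) ^ r) : Finset (Polynomial K)) : Set (Polynomial K)) := by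
            rcases hsub with hlt | hzz
            · exact ih (N₀ - 1) (by omega) _ (by omega)
            · rw [hzz]; exact Submodule.zero_mem _
          have hXk : (X : Polynomial K) ^ (N₀ - f₀.natDegree) ∈ Submodule.span B
              (((Finset.range f₀.natDegree).image
              (fun r => (X : Polynomial K) ^ r) : Finset (Polynomial K)) : Set (Polynomial K)) := by
            refine ih (N₀ - 1) (by omega) _ ?_
            rw [natDegree_X_pow]; omega
          have huB : u ∈ B := B.mul_mem (B.algebraMap_mem _) hf₀B
          have : h = (⟨u, huB⟩ : B) • (X : Polynomial K) ^ (N₀ - f₀.natDegree) + (h - v) := by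
            rw [Algebra.smul_def]
            show h = u * Polynomial.X ^ (N₀ - f₀.natDegree) + (h - v)
            rw [← hv]; ring
          rw [this]
          exact Submodule.add_mem _ (Submodule.smul_mem _ _ hXk) hhv
    have hfin : (⊤ : Submodule B (Polynomial K)).FG := by
      refine ⟨(Finset.range f₀.natDegree).image (fun r => (X : Polynomial K) ^ r), ?_⟩
      rw [eq_top_iff]
      intro h _
      exact key h.natDegree h le_rfl
    -- Artin--Tate
    have htop : (⊤ : Subalgebra K B).FG := by
      refine fg_of_fg_of_fg K B (Polynomial K) ?_ hfin Subtype.val_injective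
      exact ⟨{(Polynomial.X : Polynomial K)}, by rw [Finset.coe_singleton, Polynomial.adjoin_X]⟩
    exact (Subalgebra.fg_top B).mp htop
  · -- all elements constant
    push_neg at hc
    have : B = ⊥ := by
      apply le_antisymm _ bot_le
      intro f hf
      have : f.natDegree = 0 := Nat.eq_zero_of_not_pos (fun hpos => (by exact absurd hpos (by simpa using hc f hf)))
      obtain ⟨c, rfl⟩ := Polynomial.natDegree_eq_zero.mp this
      exact Subalgebra.algebraMap_mem ⊥ c
    rw [this]
    exact Subalgebra.fg_bot

/-- Constant polynomial equal to a product with a positive-degree factor forces zero. -/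
theorem const_eq_zero_of_eq_mul {S : Type*} [CommRing S] [IsDomain S] (u : S)
    (P Q : Polynomial S) (hP : 1 ≤ P.natDegree) (h : Polynomial.C u = P * Q) : u = 0 := by
  by_cases hu : u = 0
  · exact hu
  exfalso
  have hC : (Polynomial.C u : Polynomial S) ≠ 0 := by simpa using hu
  have hQ : Q ≠ 0 := by rintro rfl; rw [mul_zero] at h; exact hC h
  have hP0 : P ≠ 0 := by rintro rfl; rw [zero_mul] at h; exact hC h
  have hdeg := Polynomial.natDegree_mul hP0 hQ
  rw [← h, Polynomial.natDegree_C] at hdeg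
  omega


/-- Corollary: if `I = I₀ ∩ I₁` with `I₀` of dimension zero (i.e. `K[X,Y]/I₀` is a
finite-dimensional `K`-vector space) and `I₁ = ⟨p⟩` principal with `p ∉ K[X] ∪ K[Y]`,
then `A(I)` is a finitely generated `K`-algebra. -/
theorem sepPair_fg_of_inf_zeroDim_principal (K : Type) [Field K] [CharZero K] (n m : ℕ)
    (I₀ : Ideal (MvPolynomial (Fin n ⊕ Fin m) K))
    (hI₀ : FiniteDimensional K (MvPolynomial (Fin n ⊕ Fin m) K ⧸ I₀))
    (p : MvPolynomial (Fin n ⊕ Fin m) K)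
    (hpX : p ∉ supported K (Set.range (Sum.inl : Fin n → Fin n ⊕ Fin m)))
    (hpY : p ∉ supported K (Set.range (Sum.inr : Fin m → Fin n ⊕ Fin m))) :
    (sepPair (rename Sum.inl) (rename Sum.inr) (I₀ ⊓ Ideal.span {p})).FG := by
  classical
  set A := sepPair (rename Sum.inl) (rename Sum.inr) (I₀ ⊓ Ideal.span {p}) with hA
  obtain ⟨ψ, Θ, hΘl, hΘr, hΘdeg⟩ := key_subst K n m p hpX
  -- the swapped polynomial for the Y-side argument
  set e : Fin n ⊕ Fin m ≃ Fin m ⊕ Fin n := Equiv.sumComm (Fin n) (Fin m) with he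
  set p' : MvPolynomial (Fin m ⊕ Fin n) K := rename (⇑e) p with hp'
  have hpY' : p' ∉ supported K (Set.range (Sum.inl : Fin m → Fin m ⊕ Fin n)) := by
    intro hmem
    apply hpY
    rw [mem_supported] at hmem ⊢
    intro v hv
    have hback : p = rename (⇑e.symm) p' := by
      rw [hp', rename_rename]
      simp
    rw [hback] at hv
    obtain ⟨w, hw, rfl⟩ := Finset.mem_image.mp (vars_rename (⇑e.symm) p' hv)
    obtain ⟨j, rfl⟩ := hmem (Finset.mem_coe.mpr hw)
    exact ⟨j, rfl⟩
  obtain ⟨ψ', Θ', hΘ'l, hΘ'r, hΘ'deg⟩ := key_subst K m n p' hpY'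
  -- injectivity of ψ ∘ snd on A
  have main_inj : ∀ z₁ z₂ : (MvPolynomial (Fin n) K × MvPolynomial (Fin m) K),
      z₁ ∈ A → z₂ ∈ A → ψ z₁.2 = ψ z₂.2 → z₁ = z₂ := by
    rintro ⟨f₁, g₁⟩ ⟨f₂, g₂⟩ hz₁ hz₂ hψeq
    have hm₁ : rename Sum.inl f₁ - rename Sum.inr g₁ ∈ (I₀ ⊓ Ideal.span {p}) := hz₁
    have hm₂ : rename Sum.inl f₂ - rename Sum.inr g₂ ∈ (I₀ ⊓ Ideal.span {p}) := hz₂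
    obtain ⟨q₁, hq₁⟩ := (Ideal.mem_span_singleton).mp (Submodule.mem_inf.mp hm₁).2
    obtain ⟨q₂, hq₂⟩ := (Ideal.mem_span_singleton).mp (Submodule.mem_inf.mp hm₂).2
    have hdiff : rename Sum.inl (f₁ - f₂) - rename Sum.inr (g₁ - g₂) = p * (q₁ - q₂) := by
      rw [map_sub, map_sub]
      linear_combination hq₁ - hq₂
    -- apply Θ
    have happ := congrArg Θ hdiff
    rw [map_sub, map_mul, hΘl, hΘr, map_sub ψ, hψeq, sub_self, Polynomial.map_zero,
      sub_zero] at happ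
    have hf : f₁ - f₂ = 0 := const_eq_zero_of_eq_mul _ _ _ hΘdeg happ
    have hfeq : f₁ = f₂ := sub_eq_zero.mp hf
    -- now the g-side
    have hg : rename Sum.inl (g₁ - g₂) = p' * (rename (⇑e) (q₂ - q₁)) := by
      have h2 : rename Sum.inr (g₁ - g₂) = p * (q₂ - q₁) := by
        rw [hfeq] at hq₁
        rw [map_sub]
        linear_combination hq₂ - hq₁
      have := congrArg (rename (⇑e)) h2
      rw [map_mul] at this
      rw [← hp'] at this
      rw [rename_rename] at this
      have hcomp : (⇑e) ∘ (Sum.inr : Fin m → Fin n ⊕ Fin m)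
          = (Sum.inl : Fin m → Fin m ⊕ Fin n) := rfl
      rw [hcomp] at this
      exact this
    have happ' := congrArg Θ' hg
    rw [map_mul, hΘ'l] at happ'
    have hgz : g₁ - g₂ = 0 := const_eq_zero_of_eq_mul _ _ _ hΘ'deg happ'
    have hgeq : g₁ = g₂ := sub_eq_zero.mp hgz
    exact Prod.ext hfeq hgeq
  -- transfer finite generation from the image in K[s]
  set F : A →ₐ[K] Polynomial K := ψ.comp ((AlgHom.snd K _ _).comp A.val) with hF
  have hFinj : Function.Injective F := by
    intro z₁ z₂ hFz
    have : (z₁ : MvPolynomial (Fin n) K × MvPolynomial (Fin m) K)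
        = (z₂ : MvPolynomial (Fin n) K × MvPolynomial (Fin m) K) :=
      main_inj _ _ z₁.2 z₂.2 hFz
    exact Subtype.ext this
  have hrange : F.range.FG := subalgebra_polynomial_fg K F.range
  have htop1 : (⊤ : Subalgebra K F.range).FG := (Subalgebra.fg_top _).mpr hrange
  have htop2 : (⊤ : Subalgebra K A).FG := by
    set eqv : A ≃ₐ[K] F.range := AlgEquiv.ofInjective F hFinj with heqv
    apply Subalgebra.fg_of_fg_map (⊤ : Subalgebra K A) eqv.toAlgHom eqv.injective
    have hmt : (⊤ : Subalgebra K A).map eqv.toAlgHom = ⊤ := by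
      rw [Algebra.map_top]
      exact (AlgHom.range_eq_top (eqv.toAlgHom)).mpr eqv.surjective
    rw [hmt]
    exact htop1
  exact (Subalgebra.fg_top A).mp htop2
end

section
/- If I is an ideal of K[X,Y] of dimension zero, i.e., K[X,Y]/I is a finite-dimensional K-vector space, then A(I) is a finitely generated K-algebra. -/
open MvPolynomial

section Aux

variable {K A B T : Type} [Field K] [CommRing A] [CommRing B] [CommRing T]
    [Nontrivial A] [Nontrivial B] [Algebra K A] [Algebra K B] [Algebra K T]
    (ea : A →ₐ[K] T) (eb : B →ₐ[K] T) (I : Ideal T)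

/-- Given a monic `p ∈ K[t]` of positive degree with `p(b₁) - c₁ = 0` and `p(b₂)·0 = …`,
the element `(f,0)` is integral over `sepPair ea eb I` when `T/I` is module-finite. -/
theorem sepPair_isIntegral_left [Module.Finite K (T ⧸ I)] (f : A) :
    IsIntegral (sepPair ea eb I) ((f, (0 : B)) : A × B) := by
  classical
  set S := sepPair ea eb I with hSdef
  haveI : Nontrivial S :=
    ⟨0, 1, fun h => zero_ne_one (α := A × B) (congrArg Subtype.val h)⟩
  obtain ⟨p₀, hm₀, he₀⟩ := IsIntegral.of_finite K (Ideal.Quotient.mk I (ea f))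
  set p : Polynomial K := Polynomial.X * p₀ with hp
  have hpm : p.Monic := Polynomial.monic_X.mul hm₀
  have h₀ : Polynomial.aeval ((Ideal.Quotient.mk I) (ea f)) p₀ = 0 := by
    rw [Polynomial.aeval_def]; exact he₀
  have h2 : Polynomial.aeval ((Ideal.Quotient.mk I) (ea f)) p = 0 := by
    rw [hp, map_mul, h₀, mul_zero]
  have hpI : Polynomial.aeval (ea f) p ∈ I := by
    rw [← Ideal.Quotient.eq_zero_iff_mem]
    have := Polynomial.aeval_algHom_apply (Ideal.Quotient.mkₐ K I) (ea f) p
    simpa [Ideal.Quotient.mkₐ_eq_mk, h2] using this.symm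
  have haI : ea (Polynomial.aeval f p) - eb 0 ∈ I := by
    rw [map_zero, sub_zero, ← Polynomial.aeval_algHom_apply]
    exact hpI
  set a : S := ⟨(Polynomial.aeval f p, 0), haI⟩ with ha
  have hdegp : 0 < p.natDegree := by
    rw [hp, Polynomial.natDegree_mul Polynomial.X_ne_zero hm₀.ne_zero,
      Polynomial.natDegree_X]
    omega
  refine ⟨Polynomial.X * (p.map (algebraMap K S) - Polynomial.C a), ?_, ?_⟩
  · apply Polynomial.monic_X.mul
    apply (hpm.map (algebraMap K S)).sub_of_left
    apply lt_of_le_of_lt Polynomial.degree_C_le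
    rw [hpm.degree_map]
    exact Polynomial.natDegree_pos_iff_degree_pos.mp hdegp
  · have hfst : Polynomial.aeval f p = (Polynomial.aeval ((f, (0:B)) : A × B) p).1 :=
      Polynomial.aeval_algHom_apply (AlgHom.fst K A B) ((f, (0:B)) : A × B) p
    rw [← Polynomial.aeval_def, map_mul, map_sub, Polynomial.aeval_X, Polynomial.aeval_C,
      Polynomial.aeval_map_algebraMap]
    have hc : algebraMap S (A × B) a = ((Polynomial.aeval f p, (0:B)) : A × B) := rfl
    refine Prod.ext ?_ ?_
    · rw [Prod.fst_mul, Prod.fst_sub, hc, ← hfst]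
      simp
    · rw [Prod.snd_mul]
      simp

theorem sepPair_isIntegral_right [Module.Finite K (T ⧸ I)] (g : B) :
    IsIntegral (sepPair ea eb I) (((0 : A), g) : A × B) := by
  classical
  set S := sepPair ea eb I with hSdef
  haveI : Nontrivial S :=
    ⟨0, 1, fun h => zero_ne_one (α := A × B) (congrArg Subtype.val h)⟩
  obtain ⟨p₀, hm₀, he₀⟩ := IsIntegral.of_finite K (Ideal.Quotient.mk I (eb g))
  set p : Polynomial K := Polynomial.X * p₀ with hp
  have hpm : p.Monic := Polynomial.monic_X.mul hm₀
  have h₀ : Polynomial.aeval ((Ideal.Quotient.mk I) (eb g)) p₀ = 0 := by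
    rw [Polynomial.aeval_def]; exact he₀
  have h2 : Polynomial.aeval ((Ideal.Quotient.mk I) (eb g)) p = 0 := by
    rw [hp, map_mul, h₀, mul_zero]
  have hpI : Polynomial.aeval (eb g) p ∈ I := by
    rw [← Ideal.Quotient.eq_zero_iff_mem]
    have := Polynomial.aeval_algHom_apply (Ideal.Quotient.mkₐ K I) (eb g) p
    simpa [Ideal.Quotient.mkₐ_eq_mk, h2] using this.symm
  have haI : ea 0 - eb (Polynomial.aeval g p) ∈ I := by
    rw [map_zero, zero_sub]
    exact I.neg_mem (by rw [← Polynomial.aeval_algHom_apply]; exact hpI)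
  set a : S := ⟨(0, Polynomial.aeval g p), haI⟩ with ha
  have hdegp : 0 < p.natDegree := by
    rw [hp, Polynomial.natDegree_mul Polynomial.X_ne_zero hm₀.ne_zero,
      Polynomial.natDegree_X]
    omega
  refine ⟨Polynomial.X * (p.map (algebraMap K S) - Polynomial.C a), ?_, ?_⟩
  · apply Polynomial.monic_X.mul
    apply (hpm.map (algebraMap K S)).sub_of_left
    apply lt_of_le_of_lt Polynomial.degree_C_le
    rw [hpm.degree_map]
    exact Polynomial.natDegree_pos_iff_degree_pos.mp hdegp
  · have hsnd : Polynomial.aeval g p = (Polynomial.aeval (((0:A), g) : A × B) p).2 :=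
      Polynomial.aeval_algHom_apply (AlgHom.snd K A B) (((0:A), g) : A × B) p
    rw [← Polynomial.aeval_def, map_mul, map_sub, Polynomial.aeval_X, Polynomial.aeval_C,
      Polynomial.aeval_map_algebraMap]
    have hc : algebraMap S (A × B) a = (((0:A), Polynomial.aeval g p) : A × B) := rfl
    refine Prod.ext ?_ ?_
    · rw [Prod.fst_mul]
      simp
    · rw [Prod.snd_mul, Prod.snd_sub, hc, ← hsnd]
      simp

end Aux

/-- For an ideal `I` of `K[X,Y]` of dimension zero (i.e. `K[X,Y]/I` is a finite-dimensional
`K`-vector space), the algebra `A(I)` is a finitely generated `K`-algebra. -/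
theorem sepPair_fg_of_zeroDim (K : Type) [Field K] [CharZero K] (n m : ℕ)
    (I : Ideal (MvPolynomial (Fin n ⊕ Fin m) K))
    (hI : FiniteDimensional K (MvPolynomial (Fin n ⊕ Fin m) K ⧸ I)) :
    (sepPair (rename Sum.inl) (rename Sum.inr) I).FG := by
  classical
  set S := sepPair (rename (R := K) (Sum.inl : Fin n → Fin n ⊕ Fin m))
    (rename Sum.inr) I with hS
  set C := MvPolynomial (Fin n) K × MvPolynomial (Fin m) K with hC
  haveI : Module.Finite K (MvPolynomial (Fin n ⊕ Fin m) K ⧸ I) := hI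
  haveI h1 : Algebra.FiniteType K (MvPolynomial (Fin n) K) :=
    inferInstance
  haveI h2 : Algebra.FiniteType K (MvPolynomial (Fin m) K) :=
    inferInstance
  haveI hKC : Algebra.FiniteType K C := inferInstance
  haveI : Algebra.IsIntegral S C := by
    refine ⟨fun x => ?_⟩
    have hl := sepPair_isIntegral_left (rename (R := K) Sum.inl) (rename Sum.inr) I x.1
    have hr := sepPair_isIntegral_right (rename (R := K) Sum.inl) (rename Sum.inr) I x.2
    have hx : x = (x.1, (0 : MvPolynomial (Fin m) K))
        + ((0 : MvPolynomial (Fin n) K), x.2) := by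
      ext <;> simp
    rw [hx]
    exact hl.add hr
  haveI : Algebra.FiniteType S C :=
    Algebra.FiniteType.of_restrictScalars_finiteType (R := K) (S := S) (A := C)
  haveI hfin : Module.Finite S C := Algebra.IsIntegral.finite
  have hAC : (⊤ : Subalgebra K C).FG := hKC.1
  have hBC : (⊤ : Submodule S C).FG := hfin.1
  have hinj : Function.Injective (algebraMap S C) := fun x y h => Subtype.ext h
  have h := fg_of_fg_of_fg (A := K) (B := S) (C := C) hAC hBC hinj
  exact (Subalgebra.fg_top S).mp h
end

section
/- Let p ∈ K[X] be non-constant, regarded as an element of K[X,Y] (with m ≥ 1). Then A(⟨p⟩) = {(f + c, c) : f ∈ p·K[X], c ∈ K}, where c ∈ K is identified with the corresponding constant polynomial in each component; that is, (f,g) ∈ K[X] × K[Y] satisfies f − g ∈ ⟨p⟩ if and only if g is a constant c ∈ K and p divides f − c in K[X]. -/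
open MvPolynomial

/-- Units of a multivariate polynomial ring over a field are constants. -/
lemma isUnit_eq_C (K : Type) [Field K] : ∀ (n : ℕ) (p : MvPolynomial (Fin n) K),
    IsUnit p → ∃ k : K, p = MvPolynomial.C k := by
  intro n
  induction n with
  | zero =>
    intro p _
    obtain ⟨k, rfl⟩ := MvPolynomial.C_surjective (Fin 0) p
    exact ⟨k, rfl⟩
  | succ n ih =>
    intro p hu
    have hu' : IsUnit (MvPolynomial.finSuccEquiv K n p) := hu.map _
    obtain ⟨r, hr, hrp⟩ := Polynomial.isUnit_iff.1 hu'
    obtain ⟨k, rfl⟩ := ih r hr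
    refine ⟨k, ?_⟩
    have h1 := RingHom.congr_fun (MvPolynomial.finSuccEquiv_comp_C_eq_C (R := K) n) k
    simp only [RingHom.comp_apply, RingHom.coe_coe] at h1
    have h2 := congrArg (MvPolynomial.finSuccEquiv K n).symm hrp
    rw [AlgEquiv.symm_apply_apply] at h2
    rw [← h2, h1]

/-- Specialization of the `Y` variables at a point `a`, as an algebra hom
`K[X,Y] → K[X]`. -/
noncomputable def specY (K : Type) [Field K] (n m : ℕ) (a : Fin m → K) :
    MvPolynomial (Fin n ⊕ Fin m) K →ₐ[K] MvPolynomial (Fin n) K :=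
  aeval (Sum.elim X (fun j => MvPolynomial.C (a j)))

lemma specY_rename_inl (K : Type) [Field K] (n m : ℕ) (a : Fin m → K)
    (f : MvPolynomial (Fin n) K) : specY K n m a (rename Sum.inl f) = f := by
  rw [specY, aeval_rename]
  have : (Sum.elim (X : Fin n → MvPolynomial (Fin n) K)
      (fun j => MvPolynomial.C (a j))) ∘ Sum.inl = X := rfl
  rw [this]
  exact aeval_X_left_apply f

lemma specY_rename_inr (K : Type) [Field K] (n m : ℕ) (a : Fin m → K)
    (g : MvPolynomial (Fin m) K) :
    specY K n m a (rename Sum.inr g) = MvPolynomial.C (eval a g) := by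
  rw [specY, aeval_rename]
  have : (Sum.elim (X : Fin n → MvPolynomial (Fin n) K)
      (fun j => MvPolynomial.C (a j))) ∘ Sum.inr = fun j => MvPolynomial.C (a j) := rfl
  rw [this]
  have h2 : (aeval (fun j => MvPolynomial.C (a j)) :
        MvPolynomial (Fin m) K →ₐ[K] MvPolynomial (Fin n) K)
      = (Algebra.ofId K (MvPolynomial (Fin n) K)).comp (aeval a) := by
    apply MvPolynomial.algHom_ext
    intro j
    simp [Algebra.ofId_apply, MvPolynomial.algebraMap_eq]
  rw [h2]
  simp only [AlgHom.comp_apply, Algebra.ofId_apply, MvPolynomial.algebraMap_eq]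
  congr 1

/-- If `p ∈ K[X]` is non-constant, regarded as an element of `K[X,Y]` (with `m ≥ 1`), then
`A(⟨p⟩) = {(f + c, c) : f ∈ p·K[X], c ∈ K}`: a pair `(f, g) ∈ K[X] × K[Y]` satisfies
`f - g ∈ ⟨p⟩` if and only if `g` is a constant `c ∈ K` and `p` divides `f - c` in `K[X]`. -/
theorem sepPair_of_generator_in_KX (K : Type) [Field K] [CharZero K] (n m : ℕ) (hm : 0 < m)
    (p : MvPolynomial (Fin n) K) (hp : p.totalDegree ≠ 0) :
    ∀ (f : MvPolynomial (Fin n) K) (g : MvPolynomial (Fin m) K),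
      (f, g) ∈ sepPair (rename Sum.inl) (rename Sum.inr)
          (Ideal.span {(rename Sum.inl p : MvPolynomial (Fin n ⊕ Fin m) K)}) ↔
        ∃ c : K, g = MvPolynomial.C c ∧ p ∣ (f - MvPolynomial.C c) := by
  intro f g
  have hmem : (f, g) ∈ sepPair (rename Sum.inl) (rename Sum.inr)
      (Ideal.span {(rename Sum.inl p : MvPolynomial (Fin n ⊕ Fin m) K)}) ↔
      rename Sum.inl f - rename Sum.inr g ∈
        Ideal.span {(rename Sum.inl p : MvPolynomial (Fin n ⊕ Fin m) K)} := Iff.rfl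
  rw [hmem, Ideal.mem_span_singleton]
  constructor
  · intro hdvd
    -- specialization at each point a gives p ∣ f - C (eval a g)
    have key : ∀ a : Fin m → K, p ∣ f - MvPolynomial.C (eval a g) := by
      intro a
      have := (specY K n m a).toRingHom.map_dvd hdvd
      simpa [specY_rename_inl, specY_rename_inr] using this
    set c : K := eval 0 g with hc
    have hgc : ∀ a : Fin m → K, eval a g = c := by
      intro a
      by_contra hne
      have h1 := key a
      have h2 := key 0
      have h3 : p ∣ MvPolynomial.C (eval a g - c) := by
        have : MvPolynomial.C (eval a g - c) =
            (f - MvPolynomial.C c) - (f - MvPolynomial.C (eval a g)) := by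
          rw [map_sub]; ring
        rw [this]
        exact dvd_sub h2 h1
      have hne' : eval a g - c ≠ 0 := sub_ne_zero.2 hne
      have hunit : IsUnit (MvPolynomial.C (eval a g - c) : MvPolynomial (Fin n) K) :=
        (isUnit_iff_ne_zero.2 hne').map MvPolynomial.C
      have hup : IsUnit p := isUnit_of_dvd_unit h3 hunit
      obtain ⟨k, rfl⟩ := isUnit_eq_C K n p hup
      simp at hp
    refine ⟨c, ?_, key 0⟩
    apply MvPolynomial.funext
    intro x
    simp [hgc x]
  · rintro ⟨c, rfl, hdvd⟩
    have h1 : (rename Sum.inr (MvPolynomial.C c) : MvPolynomial (Fin n ⊕ Fin m) K)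
        = MvPolynomial.C c := by simp
    have h2 : (rename Sum.inl f : MvPolynomial (Fin n ⊕ Fin m) K) - MvPolynomial.C c
        = rename Sum.inl (f - MvPolynomial.C c) := by simp
    rw [h1, h2]
    exact (rename Sum.inl).toRingHom.map_dvd hdvd
end

section
/- Let n = 2 and m = 1, so K[X,Y] = K[x₁,x₂,y], and let I = ⟨x₁x₂⟩ be the ideal of K[x₁,x₂,y] generated by x₁x₂. Then the algebra A(I) ⊆ K[x₁,x₂] × K[y] is not finitely generated as a K-algebra. -/
open MvPolynomial

section Aux

variable (K : Type) [Field K]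

/-- The subalgebra under consideration. -/
noncomputable abbrev Ssep : Subalgebra K (MvPolynomial (Fin 2) K × MvPolynomial (Fin 1) K) :=
  sepPair (rename Sum.inl) (rename Sum.inr)
    (Ideal.span {(MvPolynomial.X (Sum.inl 0) * MvPolynomial.X (Sum.inl 1) :
      MvPolynomial (Fin 2 ⊕ Fin 1) K)})

variable {K}

lemma mem_Ssep_iff (p : MvPolynomial (Fin 2) K × MvPolynomial (Fin 1) K) :
    p ∈ Ssep K ↔ rename Sum.inl p.1 - rename Sum.inr p.2 ∈
      Ideal.span {(MvPolynomial.X (Sum.inl 0) * MvPolynomial.X (Sum.inl 1) :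
        MvPolynomial (Fin 2 ⊕ Fin 1) K)} := Iff.rfl

/-- Structural fact: a first component of an element of `Ssep` has vanishing coefficients on
nonzero exponents that are not divisible by `x₁x₂`. -/
lemma Ssep_coeff_eq_zero {p : MvPolynomial (Fin 2) K × MvPolynomial (Fin 1) K}
    (hp : p ∈ Ssep K) (e : Fin 2 →₀ ℕ) (he : e ≠ 0) (he' : e 0 = 0 ∨ e 1 = 0) :
    coeff e p.1 = 0 := by
  rw [mem_Ssep_iff, Ideal.mem_span_singleton] at hp
  obtain ⟨q, hq⟩ := hp
  have h1 : coeff (e.mapDomain Sum.inl) (rename (Sum.inl : Fin 2 → Fin 2 ⊕ Fin 1) p.1)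
      = coeff e p.1 := coeff_rename_mapDomain _ Sum.inl_injective _ _
  have h2 : coeff (e.mapDomain Sum.inl) (rename (Sum.inr : Fin 1 → Fin 2 ⊕ Fin 1) p.2) = 0 := by
    by_contra h
    obtain ⟨u, hu, -⟩ := coeff_rename_ne_zero _ _ _ h
    obtain ⟨i, hi⟩ : ∃ i, e i ≠ 0 := by
      by_contra h'
      push_neg at h'
      exact he (Finsupp.ext h')
    have := congrArg (fun v => v (Sum.inl i)) hu
    simp only [Finsupp.mapDomain_apply Sum.inl_injective] at this
    rw [Finsupp.mapDomain_notin_range] at this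
    · exact hi this.symm
    · rintro ⟨j, hj⟩; exact Sum.inl_ne_inr hj.symm
  have h3 : coeff (e.mapDomain Sum.inl)
      ((MvPolynomial.X (Sum.inl 0) * MvPolynomial.X (Sum.inl 1) :
        MvPolynomial (Fin 2 ⊕ Fin 1) K) * q) = 0 := by
    rw [coeff_mul]
    apply Finset.sum_eq_zero
    rintro ⟨a, b⟩ hab
    rw [Finset.HasAntidiagonal.mem_antidiagonal] at hab
    have hXX : (MvPolynomial.X (Sum.inl 0) * MvPolynomial.X (Sum.inl 1) :
        MvPolynomial (Fin 2 ⊕ Fin 1) K)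
        = monomial (Finsupp.single (Sum.inl 0) 1 + Finsupp.single (Sum.inl 1) 1) 1 := by
      rw [X, X, monomial_mul, one_mul]
    rw [hXX, coeff_monomial]
    split_ifs with h
    · exfalso
      -- then e 0 ≥ 1 and e 1 ≥ 1, contradicting he'
      have h0 : (e.mapDomain Sum.inl) ((Sum.inl : Fin 2 → Fin 2 ⊕ Fin 1) 0) = e 0 :=
        Finsupp.mapDomain_apply Sum.inl_injective _ _
      have h1' : (e.mapDomain Sum.inl) ((Sum.inl : Fin 2 → Fin 2 ⊕ Fin 1) 1) = e 1 :=
        Finsupp.mapDomain_apply Sum.inl_injective _ _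
      have ha : a = Finsupp.single (Sum.inl 0) 1 + Finsupp.single (Sum.inl 1) 1 := h.symm
      rcases he' with h' | h'
      · have h3 := congrArg (fun v => v (Sum.inl (0 : Fin 2))) hab
        simp [h0, h'] at h3
        have h4 := h3.1
        rw [ha] at h4
        simp [Finsupp.single_apply] at h4
      · have h3 := congrArg (fun v => v (Sum.inl (1 : Fin 2))) hab
        simp [h1', h'] at h3
        have h4 := h3.1
        rw [ha] at h4
        simp [Finsupp.single_apply] at h4
    · exact zero_mul _
  have := congrArg (coeff (e.mapDomain Sum.inl)) hq
  rw [coeff_sub, h1, h2, sub_zero, h3] at this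
  exact this

end Aux

/-- For `K[x₁,x₂,y]` (so `n = 2`, `m = 1`) and `I = ⟨x₁x₂⟩`, the algebra
`A(I) ⊆ K[x₁,x₂] × K[y]` is not finitely generated as a `K`-algebra. -/
theorem sepPair_x1x2_not_fg (K : Type) [Field K] [CharZero K] :
    ¬ (sepPair (rename Sum.inl) (rename Sum.inr)
        (Ideal.span {(MvPolynomial.X (Sum.inl 0) * MvPolynomial.X (Sum.inl 1) :
          MvPolynomial (Fin 2 ⊕ Fin 1) K)})).FG := by
  rintro ⟨s, hs⟩
  -- choose N bigger than all total degrees of first components of generators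
  set N : ℕ := (s.sup fun p => p.1.totalDegree) + 1 with hN
  set δ : Fin 2 →₀ ℕ := Finsupp.single 0 N + Finsupp.single 1 1 with hδ
  have hδ0 : δ 0 = N := by simp [hδ, Finsupp.single_apply]
  have hδ1 : δ 1 = 1 := by simp [hδ, Finsupp.single_apply]
  have hδsum : ∑ i ∈ δ.support, δ i = N + 1 := by
    have h : ∑ i ∈ δ.support, δ i = δ.sum fun _ n => n := rfl
    rw [h, hδ, Finsupp.sum_add_index' (fun _ => rfl) (fun _ _ _ => rfl),
      Finsupp.sum_single_index rfl, Finsupp.sum_single_index rfl]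
  -- the subalgebra of elements of Ssep whose δ-coefficient vanishes
  set T : Subalgebra K (MvPolynomial (Fin 2) K × MvPolynomial (Fin 1) K) :=
    { carrier := {p | p ∈ Ssep K ∧ coeff δ p.1 = 0}
      add_mem' := by
        rintro a b ⟨haS, ha⟩ ⟨hbS, hb⟩
        exact ⟨add_mem haS hbS, by simp [coeff_add, ha, hb]⟩
      mul_mem' := by
        rintro a b ⟨haS, ha⟩ ⟨hbS, hb⟩
        refine ⟨mul_mem haS hbS, ?_⟩
        show coeff δ (a.1 * b.1) = 0
        rw [coeff_mul]
        apply Finset.sum_eq_zero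
        rintro ⟨u, v⟩ huv
        rw [Finset.HasAntidiagonal.mem_antidiagonal] at huv
        by_cases hu0 : u = 0
        · have : v = δ := by rw [hu0, zero_add] at huv; exact huv
          rw [this, hb, mul_zero]
        by_cases hv0 : v = 0
        · have : u = δ := by rw [hv0, add_zero] at huv; exact huv
          rw [this, ha, zero_mul]
        have h1 : u 1 + v 1 = 1 := by
          have := congrArg (fun w => w (1 : Fin 2)) huv
          simpa [hδ1] using this
        rcases (by omega : u 1 = 0 ∨ v 1 = 0) with h | h
        · rw [Ssep_coeff_eq_zero haS u hu0 (Or.inr h), zero_mul]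
        · rw [Ssep_coeff_eq_zero hbS v hv0 (Or.inr h), mul_zero]
      one_mem' := by
        refine ⟨one_mem _, ?_⟩
        show coeff δ (1 : MvPolynomial (Fin 2) K) = 0
        rw [coeff_one]
        simp only [hδ]
        rw [if_neg]
        intro h
        have := congrArg (fun w => w (1 : Fin 2)) h
        simp [Finsupp.single_apply] at this
      zero_mem' := ⟨zero_mem _, by simp⟩
      algebraMap_mem' := by
        intro r
        refine ⟨Subalgebra.algebraMap_mem _ r, ?_⟩
        show coeff δ (C r : MvPolynomial (Fin 2) K) = 0
        rw [coeff_C, if_neg]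
        intro h
        have := congrArg (fun w => w (1 : Fin 2)) h
        simp [hδ1] at this }
  -- the generators lie in T
  have hsT : (s : Set (MvPolynomial (Fin 2) K × MvPolynomial (Fin 1) K)) ⊆ T := by
    intro p hp
    have hpS : p ∈ Ssep K := by
      have := Algebra.subset_adjoin (R := K) hp
      rwa [hs] at this
    refine ⟨hpS, ?_⟩
    apply coeff_eq_zero_of_totalDegree_lt
    rw [hδsum]
    calc p.1.totalDegree ≤ s.sup fun q => q.1.totalDegree :=
          Finset.le_sup (f := fun q => q.1.totalDegree) (Finset.mem_coe.1 hp)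
      _ < N + 1 := by omega
  have hST : Ssep K ≤ T := by
    have := Algebra.adjoin_le hsT
    rwa [hs] at this
  -- the witness x₁^N x₂ ∈ Ssep has nonzero δ-coefficient
  set w : MvPolynomial (Fin 2) K × MvPolynomial (Fin 1) K :=
    (monomial δ 1, 0) with hw
  have hwS : w ∈ Ssep K := by
    rw [mem_Ssep_iff]
    show rename Sum.inl (monomial δ (1 : K)) - rename Sum.inr 0 ∈ _
    rw [map_zero, sub_zero, Ideal.mem_span_singleton, rename_monomial, hδ,
      Finsupp.mapDomain_add, Finsupp.mapDomain_single, Finsupp.mapDomain_single]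
    have key : (monomial (Finsupp.single ((Sum.inl : Fin 2 → Fin 2 ⊕ Fin 1) 0) N
          + Finsupp.single ((Sum.inl : Fin 2 → Fin 2 ⊕ Fin 1) 1) 1) (1 : K))
        = X (Sum.inl 0) ^ N * X (Sum.inl 1) ^ 1 := by
      rw [X_pow_eq_monomial, X_pow_eq_monomial, monomial_mul, one_mul]
    rw [key, pow_one]
    exact mul_dvd_mul (dvd_pow_self _ (by omega)) dvd_rfl
  have := (hST hwS).2
  rw [hw] at this
  simp only [coeff_monomial, if_pos rfl] at this
  exact one_ne_zero this
end

section
/- Let I be an ideal of K[X,Y] and let Ī be the ideal of K(X,Y)[s,t] generated by φ(I). If (f,g) ∈ A(I) is not a K-multiple of (1,1), then (φ(f), φ(g)), which lies in K(X,Y)[s] × K(X,Y)[t], belongs to A(Ī) and is not a K(X,Y)-multiple of (1,1). In particular, if A(Ī) is trivial, then A(I) is trivial. -/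
open MvPolynomial

/-- The `K`-algebra homomorphism `φ : K[X,Y] → K(X,Y)[s,t]` with `φ(xᵢ) = s·xᵢ` and
`φ(yⱼ) = t·yⱼ`, where `K(X,Y)[s,t]` is realized as `(K(X,Y)[s])[t]` (inner variable `s`,
outer variable `t`). -/
noncomputable def phi (K : Type) [Field K] (n m : ℕ) :
    MvPolynomial (Fin n ⊕ Fin m) K →ₐ[K]
      Polynomial (Polynomial (FractionRing (MvPolynomial (Fin n ⊕ Fin m) K))) :=
  aeval (Sum.elim
    (fun i => Polynomial.C (Polynomial.C
        (algebraMap (MvPolynomial (Fin n ⊕ Fin m) K)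
          (FractionRing (MvPolynomial (Fin n ⊕ Fin m) K)) (X (Sum.inl i)))
        * Polynomial.X))
    (fun j => Polynomial.C (Polynomial.C
        (algebraMap (MvPolynomial (Fin n ⊕ Fin m) K)
          (FractionRing (MvPolynomial (Fin n ⊕ Fin m) K)) (X (Sum.inr j))))
        * Polynomial.X))

/-- The restriction of `φ` to `K[X]`, mapping into `K(X,Y)[s]`: `xᵢ ↦ s·xᵢ`. -/
noncomputable def phiX (K : Type) [Field K] (n m : ℕ) :
    MvPolynomial (Fin n) K →ₐ[K]
      Polynomial (FractionRing (MvPolynomial (Fin n ⊕ Fin m) K)) :=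
  aeval (fun i =>
    Polynomial.C (algebraMap (MvPolynomial (Fin n ⊕ Fin m) K)
      (FractionRing (MvPolynomial (Fin n ⊕ Fin m) K)) (X (Sum.inl i)))
      * Polynomial.X)

/-- The restriction of `φ` to `K[Y]`, mapping into `K(X,Y)[t]`: `yⱼ ↦ t·yⱼ`. -/
noncomputable def phiY (K : Type) [Field K] (n m : ℕ) :
    MvPolynomial (Fin m) K →ₐ[K]
      Polynomial (FractionRing (MvPolynomial (Fin n ⊕ Fin m) K)) :=
  aeval (fun j =>
    Polynomial.C (algebraMap (MvPolynomial (Fin n ⊕ Fin m) K)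
      (FractionRing (MvPolynomial (Fin n ⊕ Fin m) K)) (X (Sum.inr j)))
      * Polynomial.X)

/-- The algebra `A(Ī)` of separated elements of an ideal `Ī` of `K(X,Y)[s,t]`:
pairs `(F, G) ∈ K(X,Y)[s] × K(X,Y)[t]` with `F - G ∈ Ī`. -/
noncomputable def sepBar (K : Type) [Field K] (n m : ℕ)
    (Ibar : Ideal (Polynomial (Polynomial (FractionRing (MvPolynomial (Fin n ⊕ Fin m) K))))) :
    Subalgebra (FractionRing (MvPolynomial (Fin n ⊕ Fin m) K))
      (Polynomial (FractionRing (MvPolynomial (Fin n ⊕ Fin m) K)) ×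
        Polynomial (FractionRing (MvPolynomial (Fin n ⊕ Fin m) K))) :=
  sepPair Polynomial.CAlgHom (Polynomial.mapAlgHom Polynomial.CAlgHom) Ibar

set_option synthInstance.maxHeartbeats 1000000
set_option maxHeartbeats 1000000

lemma phiX_comm (K : Type) [Field K] (n m : ℕ) (f : MvPolynomial (Fin n) K) :
    Polynomial.C (phiX K n m f) = phi K n m (rename Sum.inl f) := by
  induction f using MvPolynomial.induction_on with
  | C a => simp [phiX, phi, Polynomial.algebraMap_apply]
  | add p q hp hq =>
      rw [map_add, map_add, map_add, hp, hq]; rw [← map_add]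
  | mul_X p i hp =>
      rw [map_mul, map_mul, map_mul, hp]
      simp [phiX, phi]

lemma phiY_comm (K : Type) [Field K] (n m : ℕ) (g : MvPolynomial (Fin m) K) :
    Polynomial.map Polynomial.C (phiY K n m g) = phi K n m (rename Sum.inr g) := by
  induction g using MvPolynomial.induction_on with
  | C a => simp [phiY, phi, Polynomial.algebraMap_apply]
  | add p q hp hq =>
      rw [map_add, Polynomial.map_add, map_add, hp, hq]; rw [← map_add]
  | mul_X p i hp =>
      rw [map_mul, Polynomial.map_mul, map_mul, hp]
      simp [phiY, phi]

lemma evalX0 (K : Type) [Field K] (n m : ℕ) (f : MvPolynomial (Fin n) K) :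
    Polynomial.eval 0 (phiX K n m f)
      = algebraMap K (FractionRing (MvPolynomial (Fin n ⊕ Fin m) K)) (constantCoeff f) := by
  induction f using MvPolynomial.induction_on with
  | C a => simp [phiX, Polynomial.algebraMap_apply]
  | add p q hp hq =>
      rw [map_add, Polynomial.eval_add, map_add, map_add, hp, hq]
  | mul_X p i hp =>
      rw [map_mul, Polynomial.eval_mul, map_mul, map_mul]
      simp [phiX]

lemma evalX1 (K : Type) [Field K] (n m : ℕ) (f : MvPolynomial (Fin n) K) :
    Polynomial.eval 1 (phiX K n m f)
      = algebraMap (MvPolynomial (Fin n ⊕ Fin m) K)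
          (FractionRing (MvPolynomial (Fin n ⊕ Fin m) K)) (rename Sum.inl f) := by
  induction f using MvPolynomial.induction_on with
  | C a =>
      simp only [phiX, aeval_C, rename_C]
      rw [IsScalarTower.algebraMap_apply K (FractionRing (MvPolynomial (Fin n ⊕ Fin m) K))
          (Polynomial (FractionRing (MvPolynomial (Fin n ⊕ Fin m) K))),
        Polynomial.algebraMap_eq, Polynomial.eval_C,
        IsScalarTower.algebraMap_apply K (MvPolynomial (Fin n ⊕ Fin m) K)
          (FractionRing (MvPolynomial (Fin n ⊕ Fin m) K)),
        MvPolynomial.algebraMap_eq]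
  | add p q hp hq =>
      rw [map_add, Polynomial.eval_add, map_add, map_add, hp, hq]
  | mul_X p i hp =>
      rw [map_mul, Polynomial.eval_mul, map_mul, map_mul, hp]
      congr 1
      simp [phiX]

lemma evalY0 (K : Type) [Field K] (n m : ℕ) (g : MvPolynomial (Fin m) K) :
    Polynomial.eval 0 (phiY K n m g)
      = algebraMap K (FractionRing (MvPolynomial (Fin n ⊕ Fin m) K)) (constantCoeff g) := by
  induction g using MvPolynomial.induction_on with
  | C a => simp [phiY, Polynomial.algebraMap_apply]
  | add p q hp hq =>
      rw [map_add, Polynomial.eval_add, map_add, map_add, hp, hq]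
  | mul_X p i hp =>
      rw [map_mul, Polynomial.eval_mul, map_mul, map_mul]
      simp [phiY]

lemma evalY1 (K : Type) [Field K] (n m : ℕ) (g : MvPolynomial (Fin m) K) :
    Polynomial.eval 1 (phiY K n m g)
      = algebraMap (MvPolynomial (Fin n ⊕ Fin m) K)
          (FractionRing (MvPolynomial (Fin n ⊕ Fin m) K)) (rename Sum.inr g) := by
  induction g using MvPolynomial.induction_on with
  | C a =>
      simp only [phiY, aeval_C, rename_C]
      rw [IsScalarTower.algebraMap_apply K (FractionRing (MvPolynomial (Fin n ⊕ Fin m) K))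
          (Polynomial (FractionRing (MvPolynomial (Fin n ⊕ Fin m) K))),
        Polynomial.algebraMap_eq, Polynomial.eval_C,
        IsScalarTower.algebraMap_apply K (MvPolynomial (Fin n ⊕ Fin m) K)
          (FractionRing (MvPolynomial (Fin n ⊕ Fin m) K)),
        MvPolynomial.algebraMap_eq]
  | add p q hp hq =>
      rw [map_add, Polynomial.eval_add, map_add, map_add, hp, hq]
  | mul_X p i hp =>
      rw [map_mul, Polynomial.eval_mul, map_mul, map_mul, hp]
      congr 1
      simp [phiY]

/-- Let `Ī` be the ideal of `K(X,Y)[s,t]` generated by `φ(I)`.  If `(f,g) ∈ A(I)` is not a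
`K`-multiple of `(1,1)`, then `(φ(f), φ(g)) ∈ A(Ī)` is not a `K(X,Y)`-multiple of `(1,1)`;
in particular, if `A(Ī)` is trivial then `A(I)` is trivial. -/
theorem phi_maps_nontrivial_to_nontrivial (K : Type) [Field K] [CharZero K] (n m : ℕ)
    (I : Ideal (MvPolynomial (Fin n ⊕ Fin m) K)) :
    (∀ (f : MvPolynomial (Fin n) K) (g : MvPolynomial (Fin m) K),
      (f, g) ∈ sepPair (rename Sum.inl) (rename Sum.inr) I →
      (¬ ∃ c : K, (f, g) = (MvPolynomial.C c, MvPolynomial.C c)) →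
      ((phiX K n m f, phiY K n m g) ∈ sepBar K n m (I.map (phi K n m)) ∧
        ¬ ∃ c : FractionRing (MvPolynomial (Fin n ⊕ Fin m) K),
          (phiX K n m f, phiY K n m g) = (Polynomial.C c, Polynomial.C c))) ∧
    ((∀ FG ∈ sepBar K n m (I.map (phi K n m)),
        ∃ c : FractionRing (MvPolynomial (Fin n ⊕ Fin m) K),
          FG = (Polynomial.C c, Polynomial.C c)) →
      ∀ fg ∈ sepPair (rename Sum.inl) (rename Sum.inr) I,
        ∃ c : K, fg = (MvPolynomial.C c, MvPolynomial.C c)) := by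
  have main : ∀ (f : MvPolynomial (Fin n) K) (g : MvPolynomial (Fin m) K),
      (f, g) ∈ sepPair (rename Sum.inl) (rename Sum.inr) I →
      (¬ ∃ c : K, (f, g) = (MvPolynomial.C c, MvPolynomial.C c)) →
      ((phiX K n m f, phiY K n m g) ∈ sepBar K n m (I.map (phi K n m)) ∧
        ¬ ∃ c : FractionRing (MvPolynomial (Fin n ⊕ Fin m) K),
          (phiX K n m f, phiY K n m g) = (Polynomial.C c, Polynomial.C c)) := by
    intro f g hfg hnc
    have hmem : rename Sum.inl f - rename Sum.inr g ∈ I := hfg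
    constructor
    · show Polynomial.C (phiX K n m f)
        - Polynomial.map Polynomial.C (phiY K n m g) ∈ I.map (phi K n m)
      rw [phiX_comm, phiY_comm, ← map_sub (phi K n m)]
      exact Ideal.mem_map_of_mem _ hmem
    · rintro ⟨c, hc⟩
      rw [Prod.mk.injEq] at hc
      obtain ⟨hf, hg⟩ := hc
      have hf0 := evalX0 K n m f
      have hf1 := evalX1 K n m f
      have hg0 := evalY0 K n m g
      have hg1 := evalY1 K n m g
      rw [hf, Polynomial.eval_C] at hf0 hf1
      rw [hg, Polynomial.eval_C] at hg0 hg1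
      have hamInj : Function.Injective (algebraMap (MvPolynomial (Fin n ⊕ Fin m) K)
          (FractionRing (MvPolynomial (Fin n ⊕ Fin m) K))) :=
        IsFractionRing.injective _ _
      have hrenInjX : Function.Injective
          (rename (R := K) (Sum.inl : Fin n → Fin n ⊕ Fin m)) :=
        rename_injective _ Sum.inl_injective
      have hrenInjY : Function.Injective
          (rename (R := K) (Sum.inr : Fin m → Fin n ⊕ Fin m)) :=
        rename_injective _ Sum.inr_injective
      have hfC : f = MvPolynomial.C (constantCoeff f) := by
        apply hrenInjX
        apply hamInj
        rw [← hf1, hf0, rename_C,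
          IsScalarTower.algebraMap_apply K (MvPolynomial (Fin n ⊕ Fin m) K)
            (FractionRing (MvPolynomial (Fin n ⊕ Fin m) K)),
          MvPolynomial.algebraMap_eq]
      have hgC : g = MvPolynomial.C (constantCoeff g) := by
        apply hrenInjY
        apply hamInj
        rw [← hg1, hg0, rename_C,
          IsScalarTower.algebraMap_apply K (MvPolynomial (Fin n ⊕ Fin m) K)
            (FractionRing (MvPolynomial (Fin n ⊕ Fin m) K)),
          MvPolynomial.algebraMap_eq]
      have hcc : constantCoeff f = constantCoeff g := by
        have := hf0.symm.trans hg0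
        exact (algebraMap K (FractionRing (MvPolynomial (Fin n ⊕ Fin m) K))).injective this
      exact hnc ⟨constantCoeff f, by rw [Prod.mk.injEq]; exact ⟨hfC, by rw [hcc]; exact hgC⟩⟩
  refine ⟨main, ?_⟩
  intro htriv fg hfg
  by_contra hnc
  have hfg' : (fg.1, fg.2) ∈ sepPair (rename Sum.inl) (rename Sum.inr) I := hfg
  have hnc' : ¬ ∃ c : K, (fg.1, fg.2) = (MvPolynomial.C c, MvPolynomial.C c) := hnc
  obtain ⟨h1, h2⟩ := main fg.1 fg.2 hfg' hnc'
  exact h2 (htriv _ h1)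
end

section
/- Let u₁,…,uₙ, v₁,…,vₘ ∈ K[t₁,…,t_k], and let J be the ideal of the polynomial ring K[t₁,…,t_k, x₁,…,xₙ, y₁,…,yₘ] generated by x₁ − u₁, …, xₙ − uₙ, y₁ − v₁, …, yₘ − vₘ. Then for all f ∈ K[x₁,…,xₙ] and g ∈ K[y₁,…,yₘ], one has f − g ∈ J if and only if f(u₁,…,uₙ) = g(v₁,…,vₘ) in K[t₁,…,t_k]. Consequently, the intersection K[u₁,…,uₙ] ∩ K[v₁,…,vₘ] of K-subalgebras of K[t₁,…,t_k] equals the set of all values f(u₁,…,uₙ) for pairs (f,g) with f − g ∈ J. -/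
open MvPolynomial

/-- Intersection of `K`-subalgebras via separation: for `u₁,…,uₙ, v₁,…,vₘ ∈ K[t₁,…,t_k]`
and `J = ⟨x₁ - u₁, …, xₙ - uₙ, y₁ - v₁, …, yₘ - vₘ⟩` in `K[t₁,…,t_k, x₁,…,xₙ, y₁,…,yₘ]`,
one has `f - g ∈ J ↔ f(u₁,…,uₙ) = g(v₁,…,vₘ)` for all `f ∈ K[x₁,…,xₙ]`,
`g ∈ K[y₁,…,yₘ]`; consequently `K[u₁,…,uₙ] ∩ K[v₁,…,vₘ]` is the set of all values
`f(u₁,…,uₙ)` for pairs `(f, g)` with `f - g ∈ J`. -/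
theorem algebra_intersection_via_separation (K : Type) [Field K] [CharZero K] (k n m : ℕ)
    (u : Fin n → MvPolynomial (Fin k) K) (v : Fin m → MvPolynomial (Fin k) K) :
    let J : Ideal (MvPolynomial (Fin k ⊕ (Fin n ⊕ Fin m)) K) :=
      Ideal.span
        ((Set.range fun i : Fin n =>
            MvPolynomial.X (Sum.inr (Sum.inl i)) - rename Sum.inl (u i)) ∪
         (Set.range fun j : Fin m =>
            MvPolynomial.X (Sum.inr (Sum.inr j)) - rename Sum.inl (v j)))
    (∀ (f : MvPolynomial (Fin n) K) (g : MvPolynomial (Fin m) K),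
      rename (fun i => Sum.inr (Sum.inl i)) f - rename (fun j => Sum.inr (Sum.inr j)) g ∈ J ↔
        aeval u f = aeval v g) ∧
    ((Algebra.adjoin K (Set.range u) : Set (MvPolynomial (Fin k) K)) ∩
        (Algebra.adjoin K (Set.range v) : Set (MvPolynomial (Fin k) K)) =
      {w | ∃ (f : MvPolynomial (Fin n) K) (g : MvPolynomial (Fin m) K),
        rename (fun i => Sum.inr (Sum.inl i)) f -
            rename (fun j => Sum.inr (Sum.inr j)) g ∈ J ∧
          w = aeval u f}) := by
  intro J
  set φ : MvPolynomial (Fin k ⊕ (Fin n ⊕ Fin m)) K →ₐ[K] MvPolynomial (Fin k) K :=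
    aeval (Sum.elim X (Sum.elim u v)) with hφ
  have hφL : ∀ p : MvPolynomial (Fin k) K, φ (rename Sum.inl p) = p := by
    intro p
    rw [hφ, aeval_rename]
    simp [Function.comp_def]
  have hφu : ∀ f : MvPolynomial (Fin n) K,
      φ (rename (fun i => Sum.inr (Sum.inl i)) f) = aeval u f := by
    intro f; rw [hφ, aeval_rename]; simp [Function.comp_def]
  have hφv : ∀ g : MvPolynomial (Fin m) K,
      φ (rename (fun j => Sum.inr (Sum.inr j)) g) = aeval v g := by
    intro g; rw [hφ, aeval_rename]; simp [Function.comp_def]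
  have hJker : J ≤ RingHom.ker φ.toRingHom := by
    rw [Ideal.span_le]
    rintro p (⟨i, rfl⟩ | ⟨j, rfl⟩) <;>
    · simp only [SetLike.mem_coe, RingHom.mem_ker]
      show φ _ = 0
      rw [map_sub, hφL, sub_eq_zero, hφ, aeval_X]
      simp
  have genU : ∀ i : Fin n,
      (X (Sum.inr (Sum.inl i)) - rename Sum.inl (u i) :
        MvPolynomial (Fin k ⊕ (Fin n ⊕ Fin m)) K) ∈ J := by
    intro i; exact Ideal.subset_span (Or.inl ⟨i, rfl⟩)
  have genV : ∀ j : Fin m,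
      (X (Sum.inr (Sum.inr j)) - rename Sum.inl (v j) :
        MvPolynomial (Fin k ⊕ (Fin n ⊕ Fin m)) K) ∈ J := by
    intro j; exact Ideal.subset_span (Or.inr ⟨j, rfl⟩)
  have keyU : ∀ f : MvPolynomial (Fin n) K,
      rename (fun i => Sum.inr (Sum.inl i)) f - rename Sum.inl (aeval u f) ∈ J := by
    intro f
    induction f using MvPolynomial.induction_on with
    | C a => simp
    | add p q hp hq =>
        rw [map_add, map_add, map_add, add_sub_add_comm]
        exact Ideal.add_mem _ hp hq
    | mul_X p i hp =>
        have heq : rename (fun i => Sum.inr (Sum.inl i) :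
              Fin n → Fin k ⊕ (Fin n ⊕ Fin m)) (p * X i)
            - rename Sum.inl (aeval u (p * X i))
            = rename (fun i => Sum.inr (Sum.inl i)) p *
                (X (Sum.inr (Sum.inl i)) - rename Sum.inl (u i))
              + (rename (fun i => Sum.inr (Sum.inl i)) p - rename Sum.inl (aeval u p)) *
                rename Sum.inl (u i) := by
          rw [map_mul, map_mul, map_mul, rename_X, aeval_X]
          ring
        rw [heq]
        exact Ideal.add_mem _ (Ideal.mul_mem_left _ _ (genU i))
          (Ideal.mul_mem_right _ _ hp)
  have keyV : ∀ g : MvPolynomial (Fin m) K,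
      rename (fun j => Sum.inr (Sum.inr j)) g - rename Sum.inl (aeval v g) ∈ J := by
    intro g
    induction g using MvPolynomial.induction_on with
    | C a => simp
    | add p q hp hq =>
        rw [map_add, map_add, map_add, add_sub_add_comm]
        exact Ideal.add_mem _ hp hq
    | mul_X p j hp =>
        have heq : rename (fun j => Sum.inr (Sum.inr j) :
              Fin m → Fin k ⊕ (Fin n ⊕ Fin m)) (p * X j)
            - rename Sum.inl (aeval v (p * X j))
            = rename (fun j => Sum.inr (Sum.inr j)) p *
                (X (Sum.inr (Sum.inr j)) - rename Sum.inl (v j))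
              + (rename (fun j => Sum.inr (Sum.inr j)) p - rename Sum.inl (aeval v p)) *
                rename Sum.inl (v j) := by
          rw [map_mul, map_mul, map_mul, rename_X, aeval_X]
          ring
        rw [heq]
        exact Ideal.add_mem _ (Ideal.mul_mem_left _ _ (genV j))
          (Ideal.mul_mem_right _ _ hp)
  have main : ∀ (f : MvPolynomial (Fin n) K) (g : MvPolynomial (Fin m) K),
      rename (fun i => Sum.inr (Sum.inl i)) f - rename (fun j => Sum.inr (Sum.inr j)) g ∈ J ↔
        aeval u f = aeval v g := by
    intro f g
    constructor
    · intro h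
      have h0 := hJker h
      rw [RingHom.mem_ker] at h0
      have : φ (rename (fun i => Sum.inr (Sum.inl i)) f
          - rename (fun j => Sum.inr (Sum.inr j)) g) = 0 := h0
      rw [map_sub, hφu, hφv, sub_eq_zero] at this
      exact this
    · intro h
      have heq : rename (fun i => Sum.inr (Sum.inl i)) f
          - rename (fun j => Sum.inr (Sum.inr j)) g
          = (rename (fun i => Sum.inr (Sum.inl i)) f - rename Sum.inl (aeval u f))
            - (rename (fun j => Sum.inr (Sum.inr j)) g - rename Sum.inl (aeval v g)) := by
        rw [h]; ring
      rw [heq]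
      exact Ideal.sub_mem _ (keyU f) (keyV g)
  refine ⟨main, ?_⟩
  ext w
  constructor
  · rintro ⟨hu, hv⟩
    rw [SetLike.mem_coe, Algebra.adjoin_range_eq_range_aeval] at hu hv
    obtain ⟨f, hf⟩ := hu
    obtain ⟨g, hg⟩ := hv
    exact ⟨f, g, (main f g).mpr (hf.trans hg.symm), hf.symm⟩
  · rintro ⟨f, g, hJ, rfl⟩
    have h := (main f g).mp hJ
    constructor
    · rw [SetLike.mem_coe, Algebra.adjoin_range_eq_range_aeval]
      exact ⟨f, rfl⟩
    · rw [SetLike.mem_coe, Algebra.adjoin_range_eq_range_aeval]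
      exact ⟨g, h.symm⟩
end
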